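/- arXiv:2105.14939 — 12 statements merged into one kernel-verified Lean document; each statement's English description precedes it below -/
import Mathlib

section
/- Let q be a prime power, F a finite field with q elements, K an extension field of F with [K:F] = k, and L an extension field of K with [L:K] = 2 (so |K| = q^k and |L| = q^{2k}). Suppose a ∈ K and b ∈ L satisfy b^{q^k} = -b and a^2 - b^2 = 1 (where a is identified with its image in L). Then the norm of a+b from L to F equals 1, and the norm of a-b from L to F equals 1. -/
/-!
The `q^k`-power Frobenius `σ` generates `Gal(L/K)`, so `N_{L/K}(x) = x · σ x`. Since `σ`
fixes `a` and negates `b`, it swaps `a + b` and `a - b`, whose product is `a² - b² = 1`.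
Transitivity `N_{L/F} = N_{K/F} ∘ N_{L/K}` finishes the argument.
-/

namespace FiniteField

variable {K L : Type*} [Field K] [Field L] [Fintype K] [Finite L] [Algebra K L]

theorem algebraMap_norm_eq_mul_frobeniusAlgHom_of_finrank_eq_two
    (h : Module.finrank K L = 2) (x : L) :
    algebraMap K L (Algebra.norm K x) = x * frobeniusAlgHom K L x := by
  simp [algebraMap_norm_eq_prod_pow, h, Finset.prod_range_succ, Nat.card_eq_fintype_card]

theorem norm_eq_one_of_mul_frobeniusAlgHom_eq_one (h : Module.finrank K L = 2) {x : L}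
    (hx : x * frobeniusAlgHom K L x = 1) : Algebra.norm K x = 1 :=
  (algebraMap K L).injective <| by
    rw [algebraMap_norm_eq_mul_frobeniusAlgHom_of_finrank_eq_two h, hx, map_one]

end FiniteField

/-- Lemma 1: if `b^{q^k} = -b` and `a^2 - b^2 = 1` then
`N_{L/F}(a+b) = N_{L/F}(a-b) = 1`. -/
theorem norm_add_eq_one_and_norm_sub_eq_one
    (q k : ℕ) (F K L : Type*) [Field F] [Field K] [Field L]
    [Fintype F] [Fintype K] [Fintype L]
    [Algebra F K] [Algebra K L] [Algebra F L] [IsScalarTower F K L]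
    (hF : Fintype.card F = q) (hK : Module.finrank F K = k)
    (hL : Module.finrank K L = 2)
    (a : K) (b : L) (hb : b ^ q ^ k = -b)
    (hab : (algebraMap K L a) ^ 2 - b ^ 2 = 1) :
    Algebra.norm F (algebraMap K L a + b) = 1 ∧
    Algebra.norm F (algebraMap K L a - b) = 1 := by
  have hcard : Fintype.card K = q ^ k := hF ▸ hK ▸ Module.card_eq_pow_finrank
  set σ := FiniteField.frobeniusAlgHom K L with hσ
  have hσa : σ (algebraMap K L a) = algebraMap K L a := σ.commutes a
  have hσb : σ b = -b := by rw [hσ, FiniteField.frobeniusAlgHom_apply, hcard, hb]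
  have norm_eq_one {x : L} (hx : x * σ x = 1) : Algebra.norm F x = 1 := by
    rw [← Algebra.norm_norm (S := K), FiniteField.norm_eq_one_of_mul_frobeniusAlgHom_eq_one hL hx,
      map_one]
  constructor
  · exact norm_eq_one (by rw [map_add, hσa, hσb, ← hab]; ring)
  · exact norm_eq_one (by rw [map_sub, hσa, hσb, ← hab]; ring)
end

section
/- Let q be a prime power, F a finite field with q elements, K an extension field of F with [K:F] = k where k ≥ 3, and let a_0, a_1, a_2 ∈ K. For ε ∈ {1, -1}, let D_ε be the k×k matrix over K whose (i,j)-entry (indices taken in {0,...,k-1}) equals a_m^{q^i} if (j - i) mod k = m for some m ∈ {0,1,2} and j ≥ i, equals ε·a_m^{q^i} if (j - i) mod k = m for some m ∈ {1,2} and j < i (the wrap-around entries), and equals 0 otherwise. Then det D_1 + det D_{-1} = 2·(N_{K/F}(a_0) + N_{K/F}(a_2)), where N_{K/F}(a) = a^{1+q+...+q^{k-1}} is the norm from K to F. -/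
/-!
Expanding both determinants over permutations, `σ` picks up the factor `ε ^ e(σ)`, where `e(σ)`
counts the excedances `i < σ i`: these are exactly the wrapped-around entries `D (σ i) i` it uses.
Hence `det D₁ + det D₋₁` is twice the sum over the permutations with `e(σ)` even. The offsets
`(i - σ i : Fin k)` sum to `k * e(σ)`, and on the band each offset is at most `2`, so `e(σ) = 0`
(all offsets `0`, `σ = 1`) or `e(σ) = 2` (all offsets `2`, `σ` the even shift `i ↦ i - 2`). These
two permutations contribute the products of the `a₀ ^ q ^ i` and of the `a₂ ^ q ^ i`.
-/

open Equiv Finset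

namespace Fin

variable {k : ℕ}

theorem intCast_val_sub (a b : Fin k) :
    ((a - b).val : ℤ) = a.val - b.val + if a < b then (k : ℤ) else 0 := by
  split_ifs with h
  · rw [coe_sub_iff_lt.mpr h]; omega
  · rw [coe_sub_iff_le.mpr (not_lt.mp h)]; omega

theorem val_sub_eq_mod (a b : Fin k) : (a - b).val = (a.val + k - b.val) % k := by
  rw [val_sub]; congr 1; omega

theorem eq_of_val_sub_eq_zero {a b : Fin k} (h : (a - b).val = 0) : a = b := by
  have := intCast_val_sub a b
  split_ifs at this <;> ext <;> omega

theorem eq_sub_two_of_val_sub_eq_two [NeZero k] {a b : Fin k} (h : (a - b).val = 2) :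
    b = a - 2 := by
  have hab : a - b = 2 := by
    ext; rw [h, coe_ofNat_eq_mod, Nat.mod_eq_of_lt (h ▸ (a - b).isLt)]
  rw [← hab, sub_sub_cancel]

theorem sign_subRight_two [NeZero k] : Perm.sign (Equiv.subRight (2 : Fin k)) = 1 := by
  have two : (2 : Fin k) = 1 + 1 := by ext; simp [val_add]
  have hsq : Equiv.subRight (2 : Fin k) = Equiv.subRight 1 * Equiv.subRight 1 :=
    Equiv.ext fun x => show x - 2 = x - 1 - 1 by rw [sub_sub, ← two]
  rw [hsq, Perm.sign_mul, Int.units_mul_self]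

theorem subRight_two_ne_one [NeZero k] (hk : 3 ≤ k) : Equiv.subRight (2 : Fin k) ≠ 1 := by
  intro h
  have := congrArg (fun σ : Perm (Fin k) => (σ 2).val) h
  simp [Nat.mod_eq_of_lt (show 2 < k by omega)] at this

end Fin

namespace Equiv.Perm

def excedances {α : Type*} [LinearOrder α] [Fintype α] (σ : Perm α) : Finset α :=
  {i | i < σ i}

variable {k : ℕ}

theorem sum_val_sub_apply_eq_mul_card_excedances (σ : Perm (Fin k)) :
    ∑ i, (i - σ i).val = k * #σ.excedances := by
  zify
  simp only [Fin.intCast_val_sub, sum_add_distrib, sum_sub_distrib,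
    Equiv.sum_comp σ (fun i : Fin k => (i.val : ℤ)), sub_self, zero_add, excedances]
  rw [sum_ite, sum_const, sum_const_zero]
  simp [mul_comm]

theorem eq_one_of_card_excedances_eq_zero (σ : Perm (Fin k)) (h : #σ.excedances = 0) :
    σ = 1 := by
  have hsum := σ.sum_val_sub_apply_eq_mul_card_excedances
  rw [h, mul_zero, sum_eq_zero_iff] at hsum
  exact Equiv.ext fun i => (Fin.eq_of_val_sub_eq_zero (hsum i (mem_univ i))).symm

theorem eq_subRight_two_of_card_excedances_eq_two [NeZero k] (σ : Perm (Fin k))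
    (hσ : ∀ i, (i - σ i).val ≤ 2) (h : #σ.excedances = 2) : σ = Equiv.subRight 2 := by
  have hsum : ∑ i, (i - σ i).val = ∑ _i : Fin k, 2 := by
    simp [σ.sum_val_sub_apply_eq_mul_card_excedances, h]
  rw [sum_eq_sum_iff_of_le fun i _ => hσ i] at hsum
  exact Equiv.ext fun i => Fin.eq_sub_two_of_val_sub_eq_two (hsum i (mem_univ i))

theorem card_excedances_le_two [NeZero k] (σ : Perm (Fin k)) (hσ : ∀ i, (i - σ i).val ≤ 2) :
    #σ.excedances ≤ 2 := by
  have hsum := σ.sum_val_sub_apply_eq_mul_card_excedances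
  have : ∑ i, (i - σ i).val ≤ k * 2 := by
    simpa [mul_comm] using sum_le_sum fun i (_ : i ∈ univ) => hσ i
  exact Nat.le_of_mul_le_mul_left (hsum ▸ this) (Nat.pos_of_neZero k)

theorem card_excedances_subRight_two [NeZero k] (hk : 3 ≤ k) :
    #(Perm.excedances (Equiv.subRight (2 : Fin k))) = 2 := by
  have hsum := sum_val_sub_apply_eq_mul_card_excedances (Equiv.subRight (2 : Fin k))
  simp [Nat.mod_eq_of_lt (show 2 < k by omega)] at hsum
  exact (hsum.resolve_right (by omega)).symm

end Equiv.Perm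

section ScaleBelowDiag

variable {R : Type*} [CommRing R] {n : Type*} [LinearOrder n] [Fintype n]

-- `D ε = scaleBelowDiag ε (D 1)`: the wrapped-around entries (column < row) lie below the diagonal.
def scaleBelowDiag (ε : R) (c : Matrix n n R) : Matrix n n R :=
  Matrix.of fun i j => (if j < i then ε else 1) * c i j

theorem prod_scaleBelowDiag_apply (ε : R) (c : Matrix n n R) (σ : Perm n) :
    ∏ i, scaleBelowDiag ε c (σ i) i = ε ^ #σ.excedances * ∏ i, c (σ i) i := by
  simp only [scaleBelowDiag, Matrix.of_apply, prod_mul_distrib, prod_ite, prod_const,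
    one_pow, mul_one, Perm.excedances]

theorem det_scaleBelowDiag_one_add_det_scaleBelowDiag_neg_one (c : Matrix n n R) :
    (scaleBelowDiag 1 c).det + (scaleBelowDiag (-1) c).det =
      ∑ σ : Perm n, Perm.sign σ • ((1 + (-1) ^ #σ.excedances) * ∏ i, c (σ i) i) := by
  simp only [Matrix.det_apply, prod_scaleBelowDiag_apply, one_pow, ← sum_add_distrib,
    ← smul_add, add_mul]

variable {k : ℕ} [NeZero k]

theorem det_scaleBelowDiag_one_add_det_scaleBelowDiag_neg_one_of_band (hk : 3 ≤ k)
    (c : Matrix (Fin k) (Fin k) R) (hc : ∀ i j, 3 ≤ (j - i).val → c i j = 0) :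
    (scaleBelowDiag 1 c).det + (scaleBelowDiag (-1) c).det =
      2 * (∏ i, c i i + ∏ i, c (i - 2) i) := by
  have hvanish : ∀ σ ∉ ({1, Equiv.subRight 2} : Finset (Perm (Fin k))),
      Perm.sign σ • ((1 + (-1) ^ #σ.excedances) * ∏ i, c (σ i) i) = 0 := by
    intro σ hσ
    simp only [mem_insert, mem_singleton, not_or] at hσ
    by_cases hband : ∀ i, (i - σ i).val ≤ 2
    · have hodd : #σ.excedances = 1 := by
        have h0 := mt σ.eq_one_of_card_excedances_eq_zero hσ.1
        have h2 := mt (σ.eq_subRight_two_of_card_excedances_eq_two hband) hσ.2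
        have := σ.card_excedances_le_two hband
        omega
      simp [hodd]
    · push Not at hband
      obtain ⟨i, hi⟩ := hband
      rw [prod_eq_zero (f := fun j => c (σ j) j) (mem_univ i) (hc _ _ hi), mul_zero, smul_zero]
  rw [det_scaleBelowDiag_one_add_det_scaleBelowDiag_neg_one,
    ← sum_subset (subset_univ _) fun σ _ => hvanish σ,
    sum_pair (Fin.subRight_two_ne_one hk).symm, Fin.sign_subRight_two,
    Perm.card_excedances_subRight_two hk]
  simp [Perm.excedances]
  ring

end ScaleBelowDiag

theorem det_add_det_eq_two_mul_norm_add_norm_general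
    (q k : ℕ) (hk : 3 ≤ k) (K : Type*) [Field K]
    (a : Fin 3 → K)
    (D : K → Matrix (Fin k) (Fin k) K)
    (hD : ∀ (ε : K) (i j : Fin k),
      D ε i j =
        if h : (j.val + k - i.val) % k < 3 then
          (if j.val < i.val then ε else 1) *
            (a ⟨(j.val + k - i.val) % k, h⟩) ^ q ^ i.val
        else 0) :
    (D 1).det + (D (-1)).det =
      2 * ((a 0) ^ (∑ i ∈ Finset.range k, q ^ i) +
           (a 2) ^ (∑ i ∈ Finset.range k, q ^ i)) := by
  have : NeZero k := ⟨by omega⟩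
  set c : Matrix (Fin k) (Fin k) K := Matrix.of fun i j =>
    if h : (j.val + k - i.val) % k < 3 then a ⟨(j.val + k - i.val) % k, h⟩ ^ q ^ i.val else 0
  have hDc : ∀ ε, D ε = scaleBelowDiag ε c := fun ε => by
    ext i j
    rw [hD]
    split_ifs <;> simp_all [scaleBelowDiag, c]
  have hband : ∀ i j, 3 ≤ (j - i).val → c i j = 0 := fun i j h => by
    simp [c, ← Fin.val_sub_eq_mod, h]
  have hdiag : ∏ i, c i i = a 0 ^ ∑ i ∈ range k, q ^ i := by
    simp [c, prod_pow_eq_pow_sum, Fin.sum_univ_eq_sum_range (q ^ ·)]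
  have hshift : ∏ i, c (i - 2) i = a 2 ^ ∑ i ∈ range k, q ^ i := by
    have h2 : 2 % k = 2 := Nat.mod_eq_of_lt (by omega)
    simp only [c, Matrix.of_apply, ← Fin.val_sub_eq_mod, sub_sub_cancel, Fin.coe_ofNat_eq_mod, h2,
      Nat.reduceLT, dite_true]
    change ∏ i : Fin k, a 2 ^ q ^ (Equiv.subRight 2 i).val = _
    rw [prod_pow_eq_pow_sum,
      Equiv.sum_comp (Equiv.subRight 2) (fun i : Fin k => q ^ i.val),
      Fin.sum_univ_eq_sum_range (q ^ ·)]
  rw [hDc, hDc, det_scaleBelowDiag_one_add_det_scaleBelowDiag_neg_one_of_band hk c hband,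
    hdiag, hshift]

/-- Lemma (sum of determinants): for the `k × k` circulant-like matrices `D_ε`
built from `a₀, a₁, a₂ ∈ K`, one has
`det D₁ + det D₋₁ = 2 (N_{K/F}(a₀) + N_{K/F}(a₂))`. -/
theorem det_add_det_eq_two_mul_norm_add_norm
    (q k : ℕ) (hk : 3 ≤ k) (F K : Type*) [Field F] [Field K]
    [Fintype F] [Fintype K] [Algebra F K]
    (hF : Fintype.card F = q) (hK : Module.finrank F K = k)
    (a : Fin 3 → K)
    (D : K → Matrix (Fin k) (Fin k) K)
    (hD : ∀ (ε : K) (i j : Fin k),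
      D ε i j =
        if h : (j.val + k - i.val) % k < 3 then
          (if j.val < i.val then ε else 1) *
            (a ⟨(j.val + k - i.val) % k, h⟩) ^ q ^ i.val
        else 0) :
    (D 1).det + (D (-1)).det =
      2 * ((a 0) ^ (∑ i ∈ Finset.range k, q ^ i) +
           (a 2) ^ (∑ i ∈ Finset.range k, q ^ i)) :=
  det_add_det_eq_two_mul_norm_add_norm_general q k hk K a D hD
end

section
/- Let q be a prime power, F a finite field with q elements, K an extension field of F with [K:F] = k where k ≥ 3, and L an extension field of K with [L:K] = 2. Let a_0, a_1, a_2 ∈ K and suppose N_{K/F}(a_0) + N_{K/F}(a_2) = 0, where N_{K/F}(a) = a^{(q^k-1)/(q-1)} is the norm from K to F. Then the map x ↦ a_0·x + a_1·x^q + a_2·x^{q^2} is a bijection of K if and only if the map x ↦ a_0·x + a_1·x^q + a_2·x^{q^2} (coefficients viewed in L via the inclusion K ⊆ L) is a bijection of L. -/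
/-!
Write `σ x = x ^ q` and `N c = c · σ c ⋯ σ^{k-1} c`. If `x ∈ L` is a nonzero root of
`f = a₀ x + a₁ σ x + a₂ σ² x`, so is its conjugate `x̄ = x ^ |K|`. Either `x + x̄` is a nonzero
root lying in `K`, or `x̄ = -x`; in characteristic 2 this puts `x` itself in `K`, and otherwise
`y = σ x / x` lies in `K`, has norm `N y = x̄ / x = -1` and satisfies `a₂ y σ(y) + a₁ y + a₀ = 0`.

Over `K`, let `A` be the companion matrix of `f` and `P = σ^{k-1}(A) ⋯ σ(A) A`. Then `(1, y)` is
a `(-1)`-eigenvector of `P`, and `det P = N a₀ / N a₂ = -1` forces a fixed vector `w`. Since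
`σ(P) A = A P`, both `A w` and `σ(w)` are fixed by `σ(P)`, whose fixed space is a line; so
`A w = c σ(w)` with `N c = 1`. Hilbert 90 gives `s ≠ 0` with `σ s = s c`, so `σ(s w) = A (s w)`
and the first coordinate of `s w` is a nonzero root of `f` in `K`.
-/

open Finset Matrix

section Linearized

variable {R S : Type*} [CommRing R] [CommRing S]

def linearizedMap (σ : R →+* R) (a₀ a₁ a₂ : R) : R →+ R where
  toFun x := a₀ * x + a₁ * σ x + a₂ * σ (σ x)
  map_zero' := by simp
  map_add' x y := by simp only [map_add]; ring

@[simp]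
lemma linearizedMap_apply (σ : R →+* R) (a₀ a₁ a₂ x : R) :
    linearizedMap σ a₀ a₁ a₂ x = a₀ * x + a₁ * σ x + a₂ * σ (σ x) := rfl

lemma map_linearizedMap {σ : R →+* R} {τ : S →+* S} (ψ : R →+* S)
    (hψ : ∀ r, ψ (σ r) = τ (ψ r)) (a₀ a₁ a₂ x : R) :
    ψ (linearizedMap σ a₀ a₁ a₂ x) = linearizedMap τ (ψ a₀) (ψ a₁) (ψ a₂) (ψ x) := by
  simp [hψ]

lemma bijective_linearizedMap_iff [Finite R] (σ : R →+* R) (a₀ a₁ a₂ : R) :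
    Function.Bijective (linearizedMap σ a₀ a₁ a₂) ↔
      ∀ x, linearizedMap σ a₀ a₁ a₂ x = 0 → x = 0 :=
  Finite.injective_iff_bijective.symm.trans (injective_iff_map_eq_zero _)

end Linearized

section OrbitProd

variable {R : Type*} [CommRing R]

def orbitProd (σ : R →+* R) (n : ℕ) (c : R) : R := ∏ j ∈ range n, (σ ^ j) c

lemma orbitProd_succ (σ : R →+* R) (n : ℕ) (c : R) :
    orbitProd σ (n + 1) c = orbitProd σ n c * (σ ^ n) c :=
  prod_range_succ _ _

lemma map_orbitProd {S : Type*} [CommRing S] {σ : R →+* R} {τ : S →+* S} (ψ : R →+* S)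
    (hψ : ∀ r, ψ (σ r) = τ (ψ r)) (n : ℕ) (c : R) :
    ψ (orbitProd σ n c) = orbitProd τ n (ψ c) := by
  simp only [orbitProd, map_prod, RingHom.coe_pow]
  exact prod_congr rfl fun j _ => Function.Semiconj.iterate_right hψ j c

variable {K : Type*} [Field K]

lemma orbitProd_div (σ : K →+* K) (n : ℕ) (a b : K) :
    orbitProd σ n (a / b) = orbitProd σ n a / orbitProd σ n b := by
  simp only [orbitProd, map_div₀, prod_div_distrib]

lemma orbitProd_eq_zero_iff (σ : K →+* K) {n : ℕ} (hn : n ≠ 0) {c : K} :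
    orbitProd σ n c = 0 ↔ c = 0 := by
  simp only [orbitProd, prod_eq_zero_iff, mem_range, map_eq_zero]
  exact ⟨fun ⟨_, _, h⟩ => h, fun h => ⟨0, Nat.pos_of_ne_zero hn, h⟩⟩

lemma orbitProd_ne_zero (σ : K →+* K) (n : ℕ) {c : K} (hc : c ≠ 0) : orbitProd σ n c ≠ 0 :=
  prod_ne_zero_iff.mpr fun _ _ => (map_ne_zero _).mpr hc

lemma orbitProd_div_self (σ : K →+* K) (n : ℕ) {x : K} (hx : x ≠ 0) :
    orbitProd σ n (σ x / x) = (σ ^ n) x / x := by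
  induction n with
  | zero => simp [orbitProd, hx]
  | succ n ih =>
    have hσx : (σ ^ n) x ≠ 0 := (map_ne_zero _).mpr hx
    rw [orbitProd_succ, ih, map_div₀, pow_succ, RingHom.coe_mul, Function.comp_apply]
    field_simp

end OrbitProd

section TwistedProd

variable {R : Type*} [CommRing R] {n : Type*} [Fintype n] [DecidableEq n]

def twistedProd (σ : R →+* R) (A : Matrix n n R) : ℕ → Matrix n n R
  | 0 => 1
  | i + 1 => A.map (σ ^ i) * twistedProd σ A i

variable (σ : R →+* R) (A : Matrix n n R)

lemma det_twistedProd (i : ℕ) : (twistedProd σ A i).det = orbitProd σ i A.det := by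
  induction i with
  | zero => simp [twistedProd, orbitProd]
  | succ i ih => rw [twistedProd, det_mul, ih, orbitProd_succ, ← RingHom.mapMatrix_apply,
      ← RingHom.map_det, mul_comm]

lemma map_twistedProd_mul (i : ℕ) :
    (twistedProd σ A i).map σ * A = A.map (σ ^ i) * twistedProd σ A i := by
  induction i with
  | zero => simp [twistedProd]
  | succ i ih =>
    rw [twistedProd, Matrix.map_mul, mul_assoc, ih, Matrix.map_map, ← mul_assoc, pow_succ',
      RingHom.coe_mul, mul_assoc]

lemma twistedProd_mulVec {v : n → R} {c : R} (h : A *ᵥ v = c • (σ ∘ v)) (i : ℕ) :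
    twistedProd σ A i *ᵥ v = orbitProd σ i c • ((σ ^ i) ∘ v) := by
  induction i with
  | zero => simp [twistedProd, orbitProd]
  | succ i ih =>
    rw [twistedProd, ← mulVec_mulVec, ih, mulVec_smul, orbitProd_succ, mul_smul]
    congr 1
    ext j
    rw [← RingHom.map_mulVec, h, pow_succ]
    simp

end TwistedProd

section TwoByTwo

lemma det_sub_one_add_det_add_one {R : Type*} [CommRing R] (M : Matrix (Fin 2) (Fin 2) R) :
    (M - 1).det + (M + 1).det = 2 * (M.det + 1) := by
  simp only [det_fin_two, Matrix.sub_apply, Matrix.add_apply, one_apply_eq,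
    one_apply_ne zero_ne_one, one_apply_ne one_ne_zero]
  ring

variable {K : Type*} [Field K]

lemma exists_mulVec_eq_self_of_det_eq_neg_one {P : Matrix (Fin 2) (Fin 2) K}
    (hP : P.det = -1) {v : Fin 2 → K} (hv0 : v ≠ 0) (hv : P *ᵥ v = -v) :
    ∃ w ≠ 0, P *ᵥ w = w := by
  have hplus : (P + 1).det = 0 :=
    exists_mulVec_eq_zero_iff.mp ⟨v, hv0, by rw [add_mulVec, one_mulVec, hv, neg_add_cancel]⟩
  have hminus : (P - 1).det = 0 := by
    linear_combination det_sub_one_add_det_add_one P - hplus + 2 * hP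
  obtain ⟨w, hw0, hw⟩ := exists_mulVec_eq_zero_iff.mpr hminus
  exact ⟨w, hw0, by rwa [sub_mulVec, one_mulVec, sub_eq_zero] at hw⟩

lemma exists_eq_smul_of_mulVec_eq_self {Q : Matrix (Fin 2) (Fin 2) K} (h2 : (2 : K) ≠ 0)
    {v : Fin 2 → K} (hv0 : v ≠ 0) (hv : Q *ᵥ v = -v)
    {w₁ w₂ : Fin 2 → K} (hw₁0 : w₁ ≠ 0) (hw₁ : Q *ᵥ w₁ = w₁) (hw₂ : Q *ᵥ w₂ = w₂) :
    ∃ c : K, w₂ = c • w₁ := by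
  set f := toLin' (Q - 1)
  have hmem : ∀ {w}, Q *ᵥ w = w → w ∈ LinearMap.ker f := fun hw => by
    simp [f, hw]
  have hf : f ≠ 0 := fun hf => by
    have : f v = 0 := by rw [hf, LinearMap.zero_apply]
    simp only [f, toLin'_apply, sub_mulVec, one_mulVec, hv] at this
    rw [← neg_add', neg_eq_zero, ← two_smul K, smul_eq_zero] at this
    exact hv0 (this.resolve_left h2)
  have hrange : Module.finrank K (LinearMap.range f) ≠ 0 := by
    rwa [Ne, Submodule.finrank_eq_zero, LinearMap.range_eq_bot]
  have hw₁0' : (⟨w₁, hmem hw₁⟩ : LinearMap.ker f) ≠ 0 := by simpa using hw₁0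
  have hker : Module.finrank K (LinearMap.ker f) = 1 := by
    have hsum := LinearMap.finrank_range_add_finrank_ker f
    have hpos := Module.finrank_pos_iff_exists_ne_zero (R := K).mpr ⟨_, hw₁0'⟩
    rw [Module.finrank_fin_fun] at hsum
    omega
  obtain ⟨c, hc⟩ := (finrank_eq_one_iff_of_nonzero' _ hw₁0').mp hker ⟨w₂, hmem hw₂⟩
  exact ⟨c, congrArg Subtype.val hc.symm⟩

end TwoByTwo

section Companion

variable {K : Type*} [Field K]

def companion (a₀ a₁ a₂ : K) : Matrix (Fin 2) (Fin 2) K := !![0, 1; -a₀ / a₂, -a₁ / a₂]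

lemma det_companion (a₀ a₁ a₂ : K) : (companion a₀ a₁ a₂).det = a₀ / a₂ := by
  simp [companion, det_fin_two_of, neg_div]

lemma companion_mulVec (a₀ a₁ a₂ : K) (v : Fin 2 → K) :
    companion a₀ a₁ a₂ *ᵥ v = ![v 1, -a₀ / a₂ * v 0 + -a₁ / a₂ * v 1] := by
  ext i
  fin_cases i <;> simp [companion, mulVec, dotProduct, Fin.sum_univ_two]

variable (σ : K →+* K) {a₀ a₁ a₂ : K}

lemma companion_mulVec_eq_smul (ha₂ : a₂ ≠ 0) {y : K} (hy : a₂ * (y * σ y) + a₁ * y + a₀ = 0) :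
    companion a₀ a₁ a₂ *ᵥ ![1, y] = y • (σ ∘ ![1, y]) := by
  rw [companion_mulVec]
  ext i
  fin_cases i
  · simp
  · simp only [Fin.mk_one, cons_val_one, cons_val_fin_one, cons_val_zero, Pi.smul_apply,
      Function.comp_apply, smul_eq_mul]
    field_simp
    linear_combination -hy

lemma exists_linearizedMap_eq_zero_of_companion_mulVec (ha₂ : a₂ ≠ 0) {v : Fin 2 → K}
    (hv0 : v ≠ 0) (hv : companion a₀ a₁ a₂ *ᵥ v = σ ∘ v) :
    ∃ u ≠ 0, linearizedMap σ a₀ a₁ a₂ u = 0 := by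
  rw [companion_mulVec] at hv
  have h₁ : v 1 = σ (v 0) := congrFun hv 0
  have h₂ : -a₀ / a₂ * v 0 + -a₁ / a₂ * v 1 = σ (v 1) := congrFun hv 1
  refine ⟨v 0, fun h => hv0 ?_, ?_⟩
  · ext i
    fin_cases i
    · exact h
    · simp [h₁, h]
  · rw [linearizedMap_apply, ← h₁, ← h₂]
    field_simp
    ring

end Companion

section Core

variable {K : Type*} [Field K]

theorem exists_linearizedMap_eq_zero_of_orbitProd_eq_neg_one (σ : K →+* K) {k : ℕ}
    (hσ : σ ^ k = 1) (h90 : ∀ c, orbitProd σ k c = 1 → ∃ s ≠ 0, σ s = s * c)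
    (h2 : (2 : K) ≠ 0) {a₀ a₁ a₂ : K} (ha₂ : a₂ ≠ 0)
    (hnorm : orbitProd σ k a₀ = -orbitProd σ k a₂) {y : K}
    (hy : a₂ * (y * σ y) + a₁ * y + a₀ = 0) (hNy : orbitProd σ k y = -1) :
    ∃ u ≠ 0, linearizedMap σ a₀ a₁ a₂ u = 0 := by
  set A := companion a₀ a₁ a₂
  set P := twistedProd σ A k
  have hσk : ∀ v : Fin 2 → K, (σ ^ k) ∘ v = v := fun v => by rw [hσ]; rfl
  have hne : ∀ {v : Fin 2 → K}, v 0 ≠ 0 → v ≠ 0 := fun h hv => h (by rw [hv, Pi.zero_apply])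
  have hv : P *ᵥ ![1, y] = -![1, y] := by
    rw [twistedProd_mulVec σ A (companion_mulVec_eq_smul σ ha₂ hy), hNy, hσk, neg_one_smul]
  have hdet : P.det = -1 := by
    rw [det_twistedProd, det_companion, orbitProd_div, hnorm, neg_div,
      div_self (orbitProd_ne_zero σ k ha₂)]
  obtain ⟨w, hw0, hw⟩ := exists_mulVec_eq_self_of_det_eq_neg_one hdet (hne (by simp)) hv
  set Q := P.map σ
  have hQ : ∀ v, Q *ᵥ (σ ∘ v) = σ ∘ (P *ᵥ v) := fun v => funext fun i =>
    (RingHom.map_mulVec σ P v i).symm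
  have hQA : Q * A = A * P := by simpa [hσ] using map_twistedProd_mul σ A k
  obtain ⟨c, hc⟩ : ∃ c : K, A *ᵥ w = c • (σ ∘ w) := by
    refine exists_eq_smul_of_mulVec_eq_self h2 (Q := Q) (v := σ ∘ ![1, y]) (w₁ := σ ∘ w)
      (w₂ := A *ᵥ w) (hne (by simp)) ?_ ?_ ?_ ?_
    · rw [hQ, hv]
      exact funext fun i => map_neg σ _
    · exact fun h => hw0 (funext fun i => (map_eq_zero σ).mp (congrFun h i))
    · rw [hQ, hw]
    · rw [mulVec_mulVec, hQA, ← mulVec_mulVec, hw]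
  have hNc : orbitProd σ k c = 1 := by
    have := twistedProd_mulVec σ A hc k
    rw [hσk, hw] at this
    exact smul_left_injective K hw0 (this.symm.trans (one_smul K w).symm)
  obtain ⟨s, hs0, hs⟩ := h90 c hNc
  refine exists_linearizedMap_eq_zero_of_companion_mulVec σ ha₂ (v := s • w)
    (smul_ne_zero hs0 hw0) ?_
  rw [mulVec_smul, hc, smul_smul, ← hs]
  ext i
  simp

end Core

theorem IsCyclic.exists_pow_eq_of_pow_eq_one {G : Type*} [Group G] [IsCyclic G] [Finite G]
    {d e : ℕ} (hde : Nat.card G = d * e) {g : G} (hg : g ^ e = 1) : ∃ t : G, t ^ d = g := by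
  obtain ⟨x, hx⟩ := IsCyclic.exists_generator (α := G)
  obtain ⟨m, rfl⟩ := Subgroup.mem_zpowers_iff.mp (hx g)
  have he : (e : ℤ) ≠ 0 := Nat.cast_ne_zero.mpr (right_ne_zero_of_mul (hde ▸ Nat.card_pos.ne'))
  have hdvd : (d : ℤ) * e ∣ m * e := by
    rw [← Nat.cast_mul, ← hde, ← orderOf_eq_card_of_forall_mem_zpowers hx]
    exact orderOf_dvd_iff_zpow_eq_one.mpr (by rwa [_root_.zpow_mul, zpow_natCast])
  obtain ⟨n, rfl⟩ := (mul_dvd_mul_iff_right he).mp hdvd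
  exact ⟨x ^ n, by rw [← zpow_natCast, ← _root_.zpow_mul, mul_comm]⟩

open Polynomial in
lemma mem_range_algebraMap_of_pow_card_eq_self {K L : Type*} [Field K] [Fintype K] [Field L]
    [Algebra K L] {x : L} (hx : x ^ Fintype.card K = x) : x ∈ Set.range (algebraMap K L) := by
  have hne : (X ^ Fintype.card K - X : K[X]) ≠ 0 :=
    FiniteField.X_pow_card_sub_X_ne_zero K Fintype.one_lt_card
  have hroots : ((X ^ Fintype.card K - X : K[X]).map (algebraMap K L)).roots =
      Finset.univ.val.map (algebraMap K L) := by
    rw [← FiniteField.roots_X_pow_card_sub_X K]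
    refine (roots_map_of_injective_of_card_eq_natDegree (algebraMap K L).injective ?_).symm
    rw [FiniteField.roots_X_pow_card_sub_X, FiniteField.X_pow_card_sub_X_natDegree_eq K
      Fintype.one_lt_card]
    rfl
  have : x ∈ ((X ^ Fintype.card K - X : K[X]).map (algebraMap K L)).roots := by
    rw [mem_roots (Polynomial.map_ne_zero hne)]
    simp [hx]
  rw [hroots] at this
  simpa using this

section Frobenius

variable (F : Type*) [Field F] [Fintype F]

abbrev frobeniusRingHom (R : Type*) [CommRing R] [Algebra F R] : R →+* R :=
  FiniteField.frobeniusAlgHom F R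

variable {F} {R K : Type*} [CommRing R] [Algebra F R] [Field K] [Fintype K] [Algebra F K]

lemma frobeniusRingHom_pow_apply (n : ℕ) (x : R) :
    (frobeniusRingHom F R ^ n) x = x ^ Fintype.card F ^ n := by
  rw [RingHom.coe_pow]
  exact congrFun (pow_iterate _ n) x

lemma coe_linearizedMap_frobeniusRingHom (a₀ a₁ a₂ : R) :
    ⇑(linearizedMap (frobeniusRingHom F R) a₀ a₁ a₂) =
      fun x => a₀ * x + a₁ * x ^ Fintype.card F + a₂ * x ^ Fintype.card F ^ 2 := by
  ext x
  rw [linearizedMap_apply, sq, pow_mul]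
  rfl

lemma frobeniusRingHom_pow_finrank : frobeniusRingHom F K ^ Module.finrank F K = 1 :=
  RingHom.ext fun x => by
    rw [frobeniusRingHom_pow_apply, ← Module.card_eq_pow_finrank, FiniteField.pow_card]
    rfl

lemma orbitProd_frobeniusRingHom (n : ℕ) (c : R) :
    orbitProd (frobeniusRingHom F R) n c =
      c ^ ((Fintype.card F ^ n - 1) / (Fintype.card F - 1)) := by
  simp only [orbitProd, frobeniusRingHom_pow_apply, prod_pow_eq_pow_sum,
    Nat.geomSum_eq Fintype.one_lt_card]

lemma exists_frobeniusRingHom_eq_mul_of_orbitProd_eq_one {c : K}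
    (hc : orbitProd (frobeniusRingHom F K) (Module.finrank F K) c = 1) :
    ∃ s ≠ 0, frobeniusRingHom F K s = s * c := by
  set q := Fintype.card F
  set e := (q ^ Module.finrank F K - 1) / (q - 1)
  rw [orbitProd_frobeniusRingHom] at hc
  have hde : Nat.card Kˣ = (q - 1) * e := by
    rw [Nat.card_units, Nat.card_eq_fintype_card, Module.card_eq_pow_finrank (K := F),
      Nat.mul_div_cancel' (Nat.sub_one_dvd_pow_sub_one q _)]
  have he : e ≠ 0 := right_ne_zero_of_mul (hde ▸ Nat.card_pos.ne')
  obtain ⟨t, ht⟩ := IsCyclic.exists_pow_eq_of_pow_eq_one hde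
    (g := Units.ofPowEqOne c e hc he) (Units.ext (by simp))
  refine ⟨t, t.ne_zero, ?_⟩
  change (t : K) ^ q = t * c
  rw [← pow_sub_one_mul (Fintype.card_ne_zero : q ≠ 0), mul_comm, ← Units.val_pow_eq_pow_val,
    ht, Units.val_ofPowEqOne]

end Frobenius

section Descent

variable {F K L : Type*} [Field F] [Fintype F] [Field K] [Field L] [Algebra K L] [Algebra F L]

lemma algebraMap_frobeniusRingHom [Algebra F K] (a : K) :
    algebraMap K L (frobeniusRingHom F K a) = frobeniusRingHom F L (algebraMap K L a) :=
  map_pow _ a _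

lemma frobeniusRingHom_comm [Fintype K] (x : L) :
    frobeniusRingHom K L (frobeniusRingHom F L x) = frobeniusRingHom F L (frobeniusRingHom K L x) :=
  pow_right_comm _ _ _

variable [Fintype K] [Algebra F K]

theorem exists_linearizedMap_eq_zero_of_conj_eq_neg (h2 : (2 : K) ≠ 0) {a₀ a₁ a₂ : K}
    (hnorm : orbitProd (frobeniusRingHom F K) (Module.finrank F K) a₀ =
      -orbitProd (frobeniusRingHom F K) (Module.finrank F K) a₂)
    {x : L} (hx0 : x ≠ 0) (hx : linearizedMap (frobeniusRingHom F L)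
      (algebraMap K L a₀) (algebraMap K L a₁) (algebraMap K L a₂) x = 0)
    (hconj : frobeniusRingHom K L x = -x) :
    ∃ u ≠ 0, linearizedMap (frobeniusRingHom F K) a₀ a₁ a₂ u = 0 := by
  have hk : Module.finrank F K ≠ 0 := Module.finrank_pos.ne'
  rcases eq_or_ne a₂ 0 with rfl | ha₂
  · have ha₀ : a₀ = 0 := by
      rwa [orbitProd_eq_zero_iff _ hk |>.mpr rfl, neg_zero, orbitProd_eq_zero_iff _ hk] at hnorm
    have ha₁ : a₁ = 0 := by
      simpa [ha₀, hx0] using hx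
    exact ⟨1, one_ne_zero, by simp [ha₀, ha₁]⟩
  obtain ⟨y, hy⟩ : frobeniusRingHom F L x / x ∈ Set.range (algebraMap K L) := by
    apply mem_range_algebraMap_of_pow_card_eq_self
    change frobeniusRingHom K L (frobeniusRingHom F L x / x) = frobeniusRingHom F L x / x
    rw [map_div₀, frobeniusRingHom_comm, hconj, map_neg, neg_div_neg_eq]
  refine exists_linearizedMap_eq_zero_of_orbitProd_eq_neg_one _ frobeniusRingHom_pow_finrank
    (fun c hc => exists_frobeniusRingHom_eq_mul_of_orbitProd_eq_one hc) h2 ha₂ hnorm (y := y)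
    ?_ ?_
  · apply (algebraMap K L).injective
    simp only [map_add, map_mul, map_zero, algebraMap_frobeniusRingHom, hy, map_div₀]
    rw [linearizedMap_apply] at hx
    field_simp
    linear_combination hx
  · apply (algebraMap K L).injective
    rw [map_orbitProd _ algebraMap_frobeniusRingHom, hy, orbitProd_div_self _ _ hx0,
      frobeniusRingHom_pow_apply, ← Module.card_eq_pow_finrank]
    change frobeniusRingHom K L x / x = _
    rw [hconj, neg_div, div_self hx0, map_neg, map_one]

theorem exists_linearizedMap_eq_zero_of_finrank_eq_two [Fintype L]
    (hL : Module.finrank K L = 2) {a₀ a₁ a₂ : K}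
    (hnorm : orbitProd (frobeniusRingHom F K) (Module.finrank F K) a₀ =
      -orbitProd (frobeniusRingHom F K) (Module.finrank F K) a₂)
    {x : L} (hx0 : x ≠ 0) (hx : linearizedMap (frobeniusRingHom F L)
      (algebraMap K L a₀) (algebraMap K L a₁) (algebraMap K L a₂) x = 0) :
    ∃ u ≠ 0, linearizedMap (frobeniusRingHom F K) a₀ a₁ a₂ u = 0 := by
  set τ := frobeniusRingHom K L
  have hτ : ∀ a : K, τ (algebraMap K L a) = algebraMap K L a :=
    (FiniteField.frobeniusAlgHom K L).commutes
  have hττ (z : L) : τ (τ z) = z := by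
    have := RingHom.congr_fun (frobeniusRingHom_pow_finrank (F := K) (K := L)) z
    rwa [hL, pow_two] at this
  have hfixed {z : L} (hz0 : z ≠ 0) (hz : linearizedMap (frobeniusRingHom F L)
      (algebraMap K L a₀) (algebraMap K L a₁) (algebraMap K L a₂) z = 0) (hτz : τ z = z) :
      ∃ u ≠ 0, linearizedMap (frobeniusRingHom F K) a₀ a₁ a₂ u = 0 := by
    obtain ⟨u, rfl⟩ := mem_range_algebraMap_of_pow_card_eq_self hτz
    refine ⟨u, by rintro rfl; exact hz0 (map_zero _), (algebraMap K L).injective ?_⟩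
    rw [map_linearizedMap _ algebraMap_frobeniusRingHom, hz, map_zero]
  have hτx : linearizedMap (frobeniusRingHom F L)
      (algebraMap K L a₀) (algebraMap K L a₁) (algebraMap K L a₂) (τ x) = 0 := by
    rw [← hτ a₀, ← hτ a₁, ← hτ a₂, ← map_linearizedMap τ frobeniusRingHom_comm, hx, map_zero]
  by_cases hs : x + τ x = 0
  · have hconj : τ x = -x := eq_neg_of_add_eq_zero_right hs
    by_cases h2 : (2 : K) = 0
    · refine hfixed hx0 hx ?_
      have h2L : (2 : L) = 0 := by rw [← map_ofNat (algebraMap K L) 2, h2, map_zero]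
      linear_combination hconj - x * h2L
    · exact exists_linearizedMap_eq_zero_of_conj_eq_neg h2 hnorm hx0 hx hconj
  · exact hfixed hs (by rw [map_add, hx, hτx, add_zero]) (by rw [map_add, hττ, add_comm])

end Descent

theorem bijective_iff_bijective_of_norm_add_norm_eq_zero_general
    (q k : ℕ) (F K L : Type*) [Field F] [Field K] [Field L]
    [Fintype F] [Fintype K] [Fintype L]
    [Algebra F K] [Algebra K L] [Algebra F L]
    (hF : Fintype.card F = q) (hK : Module.finrank F K = k)
    (hL : Module.finrank K L = 2)
    (a0 a1 a2 : K)
    (hnorm : a0 ^ ((q ^ k - 1) / (q - 1)) + a2 ^ ((q ^ k - 1) / (q - 1)) = 0) :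
    Function.Bijective (fun x : K => a0 * x + a1 * x ^ q + a2 * x ^ q ^ 2) ↔
    Function.Bijective (fun x : L =>
      algebraMap K L a0 * x + algebraMap K L a1 * x ^ q +
        algebraMap K L a2 * x ^ q ^ 2) := by
  subst hF hK
  have hnorm' : orbitProd (frobeniusRingHom F K) (Module.finrank F K) a0 =
      -orbitProd (frobeniusRingHom F K) (Module.finrank F K) a2 := by
    rw [orbitProd_frobeniusRingHom, orbitProd_frobeniusRingHom]
    exact eq_neg_of_add_eq_zero_left hnorm
  rw [← coe_linearizedMap_frobeniusRingHom, ← coe_linearizedMap_frobeniusRingHom,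
    bijective_linearizedMap_iff, bijective_linearizedMap_iff, ← not_iff_not]
  push Not
  constructor
  · rintro ⟨u, hu, hu0⟩
    refine ⟨algebraMap K L u, ?_, (map_ne_zero _).mpr hu0⟩
    rw [← map_linearizedMap _ algebraMap_frobeniusRingHom, hu, map_zero]
  · rintro ⟨x, hx, hx0⟩
    obtain ⟨u, hu0, hu⟩ := exists_linearizedMap_eq_zero_of_finrank_eq_two hL hnorm' hx0 hx
    exact ⟨u, hu, hu0⟩

/-- Theorem (Özbudak-type criterion): if `N_{K/F}(a₀) + N_{K/F}(a₂) = 0`, then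
`x ↦ a₀x + a₁x^q + a₂x^{q²}` permutes `K` iff it permutes the quadratic
extension `L` of `K`. -/
theorem bijective_iff_bijective_of_norm_add_norm_eq_zero
    (q k : ℕ) (hk : 3 ≤ k) (F K L : Type*) [Field F] [Field K] [Field L]
    [Fintype F] [Fintype K] [Fintype L]
    [Algebra F K] [Algebra K L] [Algebra F L] [IsScalarTower F K L]
    (hF : Fintype.card F = q) (hK : Module.finrank F K = k)
    (hL : Module.finrank K L = 2)
    (a0 a1 a2 : K)
    (hnorm : a0 ^ ((q ^ k - 1) / (q - 1)) + a2 ^ ((q ^ k - 1) / (q - 1)) = 0) :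
    Function.Bijective (fun x : K => a0 * x + a1 * x ^ q + a2 * x ^ q ^ 2) ↔
    Function.Bijective (fun x : L =>
      algebraMap K L a0 * x + algebraMap K L a1 * x ^ q +
        algebraMap K L a2 * x ^ q ^ 2) :=
  bijective_iff_bijective_of_norm_add_norm_eq_zero_general q k F K L hF hK hL a0 a1 a2 hnorm
end

section
/- Let q be a prime power, F a finite field with q elements, and K an extension field of F with [K:F] = 2n+1 (n ≥ 1). For all a, b ∈ K \ {0} there exists a unique ω ∈ K \ {0} such that there exist c ∈ F \ {0} and x ∈ K \ {0} with a = c·x^2 and b = c·ω·x^{q+1} (c identified with its image in K). -/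
/-!
The group `Kˣ ⧸ Fˣ` has order `(q^(2n+1) - 1)/(q - 1) = 1 + q + ⋯ + q^(2n)`, which is odd, so
squaring is a bijection on it. Surjectivity writes `a = c x²` with `c ∈ Fˣ`. Injectivity says that
`x` is determined up to a factor `e ∈ Fˣ`; since `e^q = e`, replacing `(c, x)` by `(c e⁻², e x)`
leaves `c x^(q+1)` unchanged as well, so `ω = b / (c x^(q+1))` is forced.
-/

open Finset Function

theorem Nat.odd_geom_sum {d : ℕ} (q : ℕ) (hd : Odd d) : Odd (∑ i ∈ range d, q ^ i) := by
  obtain ⟨k, rfl⟩ := hd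
  induction k with
  | zero => simp
  | succ k ih =>
    have hstep : Even (q ^ (2 * k + 1) + q ^ (2 * k + 2)) := by
      rw [show q ^ (2 * k + 1) + q ^ (2 * k + 2) = q ^ (2 * k) * (q * (q + 1)) by ring]
      exact (Nat.even_mul_succ_self q).mul_left _
    rw [show 2 * (k + 1) + 1 = 2 * k + 1 + 1 + 1 by ring, sum_range_succ, sum_range_succ,
      add_assoc]
    exact ih.add_even hstep

section

variable (F K : Type*) [Field F] [Field K] [Algebra F K]

abbrev unitsRange : Subgroup Kˣ := (Units.map (algebraMap F K : F →* K)).range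

variable {F K}

lemma mem_unitsRange_iff {u : Kˣ} : u ∈ unitsRange F K ↔ (u : K) ∈ Set.range (algebraMap F K) := by
  constructor
  · rintro ⟨c, rfl⟩
    exact ⟨c, rfl⟩
  · rintro ⟨c, hc⟩
    have hc0 : c ≠ 0 := by rintro rfl; exact u.ne_zero (by simpa using hc.symm)
    exact ⟨Units.mk0 c hc0, Units.ext hc⟩

variable [Finite K]

theorem natCard_quotient_unitsRange :
    Nat.card (Kˣ ⧸ unitsRange F K) = ∑ i ∈ range (Module.finrank F K), Nat.card F ^ i := by
  have : Finite F := Finite.of_injective _ (algebraMap F K).injective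
  have hq : 2 ≤ Nat.card F := Finite.one_lt_card
  have hcard := (unitsRange F K).card_eq_card_quotient_mul_card_subgroup
  rw [← Nat.card_congr (MonoidHom.ofInjective
      (Units.map_injective (f := (algebraMap F K : F →* K)) (algebraMap F K).injective)).toEquiv,
    Nat.card_units, Nat.card_units,
    Module.natCard_eq_pow_finrank (K := F)] at hcard
  have hgeom := geom_sum_mul_add (Nat.card F - 1) (Module.finrank F K)
  rw [Nat.sub_add_cancel (by omega)] at hgeom
  apply Nat.eq_of_mul_eq_mul_right (by omega : 0 < Nat.card F - 1)
  omega

theorem sq_bijective_quotient_unitsRange (hd : Odd (Module.finrank F K)) :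
    Bijective (fun g : Kˣ ⧸ unitsRange F K => g ^ 2) :=
  Nat.Coprime.pow_left_bijective <| Nat.coprime_two_right.mpr <| by
    rw [natCard_quotient_unitsRange]
    exact Nat.odd_geom_sum _ hd

theorem exists_eq_algebraMap_mul_sq (hd : Odd (Module.finrank F K)) {a : K} (ha : a ≠ 0) :
    ∃ c : F, c ≠ 0 ∧ ∃ x : K, x ≠ 0 ∧ a = algebraMap F K c * x ^ 2 := by
  obtain ⟨g, hg⟩ := (sq_bijective_quotient_unitsRange hd).surjective (Units.mk0 a ha)
  obtain ⟨v, rfl⟩ := QuotientGroup.mk_surjective g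
  obtain ⟨c, hcv⟩ := QuotientGroup.eq.mp hg
  refine ⟨c, c.ne_zero, v, v.ne_zero, ?_⟩
  have hc : algebraMap F K c = (v ^ 2 : K)⁻¹ * a := by simpa using congrArg Units.val hcv
  rw [hc]
  field_simp

theorem mem_range_algebraMap_of_sq_mem (hd : Odd (Module.finrank F K)) {z : K}
    (hz : z ^ 2 ∈ Set.range (algebraMap F K)) : z ∈ Set.range (algebraMap F K) := by
  rcases eq_or_ne z 0 with rfl | hz0
  · exact ⟨0, map_zero _⟩
  have h : (QuotientGroup.mk (Units.mk0 z hz0) : Kˣ ⧸ unitsRange F K) ^ 2 = 1 ^ 2 := by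
    rw [← QuotientGroup.mk_pow, one_pow, QuotientGroup.eq_one_iff, mem_unitsRange_iff]
    simpa using hz
  have hz1 := (sq_bijective_quotient_unitsRange hd).injective h
  rw [QuotientGroup.eq_one_iff, mem_unitsRange_iff] at hz1
  simpa using hz1

theorem algebraMap_mul_pow_card_add_one_eq [Fintype F] (hd : Odd (Module.finrank F K))
    {c c' : F} {x y : K} (hc : c ≠ 0) (hy : y ≠ 0)
    (h : algebraMap F K c * x ^ 2 = algebraMap F K c' * y ^ 2) :
    algebraMap F K c * x ^ (Fintype.card F + 1) =
      algebraMap F K c' * y ^ (Fintype.card F + 1) := by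
  have hcK : algebraMap F K c ≠ 0 := (map_ne_zero _).mpr hc
  obtain ⟨e, he⟩ : x / y ∈ Set.range (algebraMap F K) := by
    refine mem_range_algebraMap_of_sq_mem hd ⟨c' / c, ?_⟩
    rw [map_div₀, div_pow, div_eq_div_iff hcK (pow_ne_zero 2 hy)]
    linear_combination h.symm
  have hx : x = algebraMap F K e * y := by rw [he]; field_simp
  have hc' : algebraMap F K c' = algebraMap F K c * algebraMap F K e ^ 2 := by
    rw [hx, mul_pow, ← mul_assoc] at h
    exact (mul_right_cancel₀ (pow_ne_zero 2 hy) h).symm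
  rw [hx, hc', mul_pow, pow_succ (algebraMap F K e), ← map_pow, FiniteField.pow_card]
  ring

end

theorem existsUnique_omega_partition_general
    (q n : ℕ) (F K : Type*) [Field F] [Field K]
    [Fintype F] [Fintype K] [Algebra F K]
    (hF : Fintype.card F = q) (hK : Module.finrank F K = 2 * n + 1)
    (a b : K) (ha : a ≠ 0) (hb : b ≠ 0) :
    ∃! ω : K, ω ≠ 0 ∧ ∃ c : F, c ≠ 0 ∧ ∃ x : K, x ≠ 0 ∧
      a = algebraMap F K c * x ^ 2 ∧
      b = algebraMap F K c * ω * x ^ (q + 1) := by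
  subst hF
  have hd : Odd (Module.finrank F K) := hK ▸ odd_two_mul_add_one n
  obtain ⟨c, hc, x, hx, rfl⟩ := exists_eq_algebraMap_mul_sq hd ha
  have hcK : algebraMap F K c ≠ 0 := (map_ne_zero _).mpr hc
  have hcx : algebraMap F K c * x ^ (Fintype.card F + 1) ≠ 0 := mul_ne_zero hcK (pow_ne_zero _ hx)
  refine ⟨b / (algebraMap F K c * x ^ (Fintype.card F + 1)),
    ⟨div_ne_zero hb hcx, c, hc, x, hx, rfl, by field_simp⟩, ?_⟩
  rintro ω ⟨-, c', hc', y, hy, hxy, rfl⟩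
  rw [algebraMap_mul_pow_card_add_one_eq hd hc hy hxy, mul_right_comm,
    mul_div_cancel_left₀ _ (mul_ne_zero ((map_ne_zero _).mpr hc') (pow_ne_zero _ hy))]

/-- Lemma: the sets `𝒱_ω`, `ω ∈ K \ {0}`, partition the points of `ℙ(K × K)`
with both coordinates nonzero: for every `(a, b)` with `a, b ≠ 0` there is a
unique `ω ≠ 0` with `(a, b)` an `F`-multiple of `(x², ω x^{q+1})` for some
`x ≠ 0`. -/
theorem existsUnique_omega_partition
    (q n : ℕ) (hn : 1 ≤ n) (F K : Type*) [Field F] [Field K]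
    [Fintype F] [Fintype K] [Algebra F K]
    (hF : Fintype.card F = q) (hK : Module.finrank F K = 2 * n + 1)
    (a b : K) (ha : a ≠ 0) (hb : b ≠ 0) :
    ∃! ω : K, ω ≠ 0 ∧ ∃ c : F, c ≠ 0 ∧ ∃ x : K, x ≠ 0 ∧
      a = algebraMap F K c * x ^ 2 ∧
      b = algebraMap F K c * ω * x ^ (q + 1) :=
  existsUnique_omega_partition_general q n F K hF hK a b ha hb
end

section
/- Let q be a prime power, F a finite field with q elements, K an extension field of F with [K:F] = 2n+1 (n ≥ 1), and ω ∈ K \ {0}. Let x, y, z ∈ K \ {0} be such that none of the ratios x/y, y/z, x/z lies in the image of F in K. Then the three vectors (x^2, ω·x^{q+1}), (y^2, ω·y^{q+1}), (z^2, ω·z^{q+1}) of the F-vector space K × K are linearly independent over F. -/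
/-!
If `∑ gᵢ • (pᵢ², ω pᵢ^(q+1)) = 0` with `gᵢ ∈ F`, then applying the `F`-linear Frobenius `u ↦ u^q`
to the first coordinate adds the relation `∑ gᵢ pᵢ^(2q) = 0`. With `wᵢ = gᵢ pᵢ²` and
`αᵢ = pᵢ^(q-1)` the three relations read `∑ wᵢ αᵢʲ = 0` for `j = 0, 1, 2`, and the `αᵢ` are
distinct because `αᵢ = αⱼ` makes `pᵢ / pⱼ` a root of `X^q - X`, i.e. an element of `F`.
So the Vandermonde matrix of the `αᵢ` is invertible and all `wᵢ` vanish.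
-/

open Polynomial

namespace FiniteField

variable {F K : Type*} [Field F] [Fintype F] [Field K] [Algebra F K]

theorem mem_range_algebraMap_of_pow_card_eq_self {u : K} (hu : u ^ Fintype.card F = u) :
    u ∈ Set.range (algebraMap F K) := by
  have hroots := roots_map_of_injective_of_card_eq_natDegree (algebraMap F K).injective
    (p := (X ^ Fintype.card F - X : F[X]))
    (by rw [roots_X_pow_card_sub_X, X_pow_card_sub_X_natDegree_eq F Fintype.one_lt_card]; simp)
  have hu_root : u ∈ ((X ^ Fintype.card F - X : F[X]).map (algebraMap F K)).roots := by
    rw [mem_roots (map_ne_zero (X_pow_card_sub_X_ne_zero F Fintype.one_lt_card))]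
    simp [hu]
  rw [← hroots, roots_X_pow_card_sub_X] at hu_root
  simpa using hu_root

theorem pow_card_sub_one_ne_of_div_notMem_range {s t : K} (ht : t ≠ 0)
    (hst : s / t ∉ Set.range (algebraMap F K)) :
    s ^ (Fintype.card F - 1) ≠ t ^ (Fintype.card F - 1) := by
  intro h
  apply hst
  apply mem_range_algebraMap_of_pow_card_eq_self
  calc (s / t) ^ Fintype.card F = (s / t) ^ (Fintype.card F - 1) * (s / t) := by
        rw [← pow_succ, Nat.sub_add_cancel Fintype.card_pos]
    _ = s / t := by rw [div_pow, h, div_self (pow_ne_zero _ ht), one_mul]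

theorem sum_smul_pow_card_eq_zero {ι R : Type*} [Fintype ι] [CommRing R] [Algebra F R]
    {g : ι → F} {v : ι → R} (h : ∑ i, g i • v i = 0) :
    ∑ i, g i • v i ^ Fintype.card F = 0 := by
  simpa [map_sum, map_smul] using congrArg (frobeniusAlgHom F R) h

theorem linearIndependent_sq_pow_card_add_one {p : Fin 3 → K} (hp : ∀ i, p i ≠ 0)
    (hinj : Function.Injective fun i ↦ p i ^ (Fintype.card F - 1)) {ω : K} (hω : ω ≠ 0) :
    LinearIndependent F fun i ↦ (p i ^ 2, ω * p i ^ (Fintype.card F + 1)) := by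
  set q := Fintype.card F
  have hq : 1 ≤ q := Fintype.card_pos
  rw [Fintype.linearIndependent_iff]
  intro g hg
  have hsq : ∑ i, g i • p i ^ 2 = 0 := by
    simpa only [Prod.fst_sum, Prod.smul_fst, Prod.fst_zero] using congrArg Prod.fst hg
  have hmid : ∑ i, g i • p i ^ (q + 1) = 0 := by
    have h := congrArg Prod.snd hg
    simp only [Prod.snd_sum, Prod.smul_snd, Prod.snd_zero, ← mul_smul_comm, ← Finset.mul_sum] at h
    exact (mul_eq_zero.mp h).resolve_left hω
  have hfrob : ∑ i, g i • p i ^ (2 * q) = 0 := by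
    simpa only [← pow_mul] using sum_smul_pow_card_eq_zero hsq
  have hexp (u : K) (j : ℕ) : u ^ 2 * (u ^ (q - 1)) ^ j = u ^ (2 + (q - 1) * j) := by
    rw [← pow_mul, ← pow_add]
  have hw : (fun i ↦ algebraMap F K (g i) * p i ^ 2) = 0 := by
    refine Matrix.eq_zero_of_forall_pow_sum_mul_pow_eq_zero hinj fun j ↦ ?_
    simp_rw [mul_assoc, hexp, ← Algebra.smul_def]
    fin_cases j
    · simpa using hsq
    · convert hmid using 4; dsimp only [Fin.val_mk]; omega
    · convert hfrob using 4; dsimp only [Fin.val_mk]; omega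
  intro i
  simpa [hp i] using congrFun hw i

end FiniteField

theorem veronese_pointset_is_cap_general
    (q : ℕ) (F K : Type*) [Field F] [Field K]
    [Fintype F] [Algebra F K]
    (hF : Fintype.card F = q)
    (ω : K) (hω : ω ≠ 0)
    (x y z : K) (hx : x ≠ 0) (hy : y ≠ 0) (hz : z ≠ 0)
    (hxy : x / y ∉ Set.range (algebraMap F K))
    (hyz : y / z ∉ Set.range (algebraMap F K))
    (hxz : x / z ∉ Set.range (algebraMap F K)) :
    LinearIndependent F
      ![((x ^ 2, ω * x ^ (q + 1)) : K × K),
        (y ^ 2, ω * y ^ (q + 1)),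
        (z ^ 2, ω * z ^ (q + 1))] := by
  subst hF
  have hxy' := FiniteField.pow_card_sub_one_ne_of_div_notMem_range hy hxy
  have hyz' := FiniteField.pow_card_sub_one_ne_of_div_notMem_range hz hyz
  have hxz' := FiniteField.pow_card_sub_one_ne_of_div_notMem_range hz hxz
  have hinj : Function.Injective fun i ↦ ![x, y, z] i ^ (Fintype.card F - 1) := by
    intro i j
    fin_cases i <;> fin_cases j <;> simp [hxy', hyz', hxz', hxy'.symm, hyz'.symm, hxz'.symm]
  convert FiniteField.linearIndependent_sq_pow_card_add_one
    (p := ![x, y, z]) (by simp [Fin.forall_fin_succ, hx, hy, hz]) hinj hω using 1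
  ext i : 1
  fin_cases i <;> rfl

/-- Proposition: `𝒱_ω` is a cap. If `x, y, z ∈ K \ {0}` give pairwise distinct
projective points (i.e. no ratio lies in `F`), then the three vectors
`(x², ω x^{q+1})`, `(y², ω y^{q+1})`, `(z², ω z^{q+1})` are `F`-linearly
independent. -/
theorem veronese_pointset_is_cap
    (q n : ℕ) (hn : 1 ≤ n) (F K : Type*) [Field F] [Field K]
    [Fintype F] [Fintype K] [Algebra F K]
    (hF : Fintype.card F = q) (hK : Module.finrank F K = 2 * n + 1)
    (ω : K) (hω : ω ≠ 0)
    (x y z : K) (hx : x ≠ 0) (hy : y ≠ 0) (hz : z ≠ 0)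
    (hxy : x / y ∉ Set.range (algebraMap F K))
    (hyz : y / z ∉ Set.range (algebraMap F K))
    (hxz : x / z ∉ Set.range (algebraMap F K)) :
    LinearIndependent F
      ![((x ^ 2, ω * x ^ (q + 1)) : K × K),
        (y ^ 2, ω * y ^ (q + 1)),
        (z ^ 2, ω * z ^ (q + 1))] :=
  veronese_pointset_is_cap_general q F K hF ω hω x y z hx hy hz hxy hyz hxz
end

section
/- Let q be an odd prime power, F a finite field with q elements, and K an extension field of F with [K:F] = 2n+1 (n ≥ 1). Let S ⊆ K × K be the set S = { (x^2, x^{q+1}) : x ∈ K \ {0} } ∪ { (x^2, -x^{q+1}) : x ∈ K \ {0} }. If u, v, w ∈ S are such that no two of u, v, w are F-proportional (i.e. none is a nonzero F-scalar multiple of another), then u, v, w are linearly independent over F. -/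
/-!
Every point `(x², ±x^{q+1})` lies on the curve `Y² = X·X^q`, which is stable under scaling by `F`
because `a^q = a` on `F`. A dependence `a u + b v + c w = 0` therefore rescales to three points
`(Xᵢ, Yᵢ)` of the curve summing to zero. Applying Frobenius to `∑ Xᵢ = 0` and squaring `∑ Yᵢ = 0`
twice forces `(X₂ X₃^q - X₃ X₂^q)² = 0` (here `2 ≠ 0` since `q` is odd), so `X₂ / X₃` is fixed by
Frobenius and lies in `F`; then also `Y₂ = (X₂ / X₃) Y₃`, and two of the points are proportional.
-/

open Polynomial

namespace FiniteField

theorem mem_range_algebraMap_of_pow_card_eq_self_s8 {F K : Type*} [Field F] [Fintype F] [Field K]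
    [Algebra F K] {t : K} (ht : t ^ Fintype.card F = t) : t ∈ (algebraMap F K).range := by
  have hq := Fintype.one_lt_card (α := F)
  have hsplit : (X ^ Fintype.card F - X : F[X]).Splits := by
    rw [splits_iff_card_roots, roots_X_pow_card_sub_X, X_pow_card_sub_X_natDegree_eq F hq]
    rfl
  exact hsplit.mem_range_of_isRoot (X_pow_card_sub_X_ne_zero F hq) (by simp [ht])

theorem two_ne_zero_of_odd_card {F K : Type*} [Field F] [Fintype F] [Field K] [Algebra F K]
    (hodd : Odd (Fintype.card F)) : (2 : K) ≠ 0 := by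
  have hchar : ringChar F ≠ 2 := by
    rw [Ne, even_card_iff_char_two, ← Nat.even_iff]
    exact Nat.not_even_iff_odd.mpr hodd
  have h := (algebraMap F K).injective.ne (Ring.two_ne_zero hchar)
  rwa [map_ofNat, map_zero] at h

end FiniteField

/-- Squaring `A = -(B + C)` gives `2BC = QR' + RQ'`; squaring once more against
`B²C² = QQ'RR'` gives `(QR' - RQ')² = 0`. -/
theorem mul_eq_mul_of_sq_eq_mul_of_add_eq_zero {K : Type*} [Field K] (h2 : (2 : K) ≠ 0)
    {P Q R P' Q' R' A B C : K} (hX : P + Q + R = 0) (hX' : P' + Q' + R' = 0)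
    (hY : A + B + C = 0) (hA : A ^ 2 = P * P') (hB : B ^ 2 = Q * Q') (hC : C ^ 2 = R * R') :
    Q * R' = R * Q' ∧ B * C = Q * R' := by
  have hBC : 2 * (B * C) = Q * R' + R * Q' := by
    linear_combination hA - hB - hC - (A - B - C) * hY + P * hX' - (Q' + R') * hX
  have hsq : (Q * R' - R * Q') ^ 2 = 0 := by
    linear_combination (-(2 * (B * C)) - (Q * R' + R * Q')) * hBC + 4 * C ^ 2 * hB
      + 4 * (Q * Q') * hC
  have hQR : Q * R' = R * Q' := sub_eq_zero.mp (pow_eq_zero_iff two_ne_zero |>.mp hsq)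
  exact ⟨hQR, mul_left_cancel₀ h2 (by linear_combination hBC - hQR)⟩

section FrobeniusCurve

variable {F K : Type*} [Fintype F] [Field K]

variable (F K) in
def frobeniusCurve : Set (K × K) := {u | u.2 ^ 2 = u.1 * u.1 ^ Fintype.card F}

theorem mem_frobeniusCurve {u : K × K} :
    u ∈ frobeniusCurve F K ↔ u.2 ^ 2 = u.1 * u.1 ^ Fintype.card F :=
  Iff.rfl

theorem mem_frobeniusCurve_and_fst_ne_zero {u : K × K}
    (h : ∃ x : K, x ≠ 0 ∧ (u = (x ^ 2, x ^ (Fintype.card F + 1)) ∨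
      u = (x ^ 2, -x ^ (Fintype.card F + 1)))) :
    u ∈ frobeniusCurve F K ∧ u.1 ≠ 0 := by
  obtain ⟨x, hx, rfl | rfl⟩ := h <;>
  · rw [mem_frobeniusCurve]
    exact ⟨by ring, pow_ne_zero _ hx⟩

variable [Field F] [Algebra F K]

theorem smul_mem_frobeniusCurve {u : K × K} (hu : u ∈ frobeniusCurve F K) (c : F) :
    c • u ∈ frobeniusCurve F K := by
  have hc : algebraMap F K c ^ Fintype.card F = algebraMap F K c := by
    rw [← map_pow, FiniteField.pow_card]
  rw [mem_frobeniusCurve, Prod.smul_fst, Prod.smul_snd, Algebra.smul_def, Algebra.smul_def,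
    mul_pow, mul_pow, hc, mem_frobeniusCurve.mp hu]
  ring

theorem exists_eq_smul_of_add_add_eq_zero (h2 : (2 : K) ≠ 0) {u v w : K × K}
    (hu : u ∈ frobeniusCurve F K) (hv : v ∈ frobeniusCurve F K) (hw : w ∈ frobeniusCurve F K)
    (hw0 : w.1 ≠ 0) (h : u + v + w = 0) : ∃ t : F, v = t • w := by
  rw [mem_frobeniusCurve] at hu hv hw
  have hX : u.1 + v.1 + w.1 = 0 := congrArg Prod.fst h
  have hY : u.2 + v.2 + w.2 = 0 := congrArg Prod.snd h
  have hX' : u.1 ^ Fintype.card F + v.1 ^ Fintype.card F + w.1 ^ Fintype.card F = 0 := by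
    simpa only [map_add, map_zero, FiniteField.frobeniusAlgHom_apply] using
      congrArg (FiniteField.frobeniusAlgHom F K) hX
  obtain ⟨hQR, hBC⟩ := mul_eq_mul_of_sq_eq_mul_of_add_eq_zero h2 hX hX' hY hu hv hw
  have hfix : (v.1 / w.1) ^ Fintype.card F = v.1 / w.1 := by
    rw [div_pow, div_eq_div_iff (pow_ne_zero _ hw0) hw0]
    linear_combination -hQR
  obtain ⟨t, ht⟩ := FiniteField.mem_range_algebraMap_of_pow_card_eq_self_s8 hfix
  have hv1 : v.1 = algebraMap F K t * w.1 := by rw [ht, div_mul_cancel₀ _ hw0]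
  have hw2 : w.2 ≠ 0 := by
    have : w.2 ^ 2 ≠ 0 := by rw [hw]; exact mul_ne_zero hw0 (pow_ne_zero _ hw0)
    exact pow_ne_zero_iff two_ne_zero |>.mp this
  have hv2 : v.2 = algebraMap F K t * w.2 :=
    mul_right_cancel₀ hw2 <| by
      linear_combination hBC + w.1 ^ Fintype.card F * hv1 - algebraMap F K t * hw
  exact ⟨t, Prod.ext (by simpa [Algebra.smul_def] using hv1)
    (by simpa [Algebra.smul_def] using hv2)⟩

theorem eq_zero_or_eq_zero_of_smul_add_smul_add_smul_eq_zero (h2 : (2 : K) ≠ 0) {u v w : K × K}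
    (hu : u ∈ frobeniusCurve F K) (hv : v ∈ frobeniusCurve F K) (hw : w ∈ frobeniusCurve F K)
    (hv0 : v.1 ≠ 0) (hw0 : w.1 ≠ 0) (hvw : ∀ s : F, s ≠ 0 → v ≠ s • w) {a b c : F}
    (h : a • u + b • v + c • w = 0) : b = 0 ∨ c = 0 := by
  by_contra! hbc
  obtain ⟨t, ht⟩ := exists_eq_smul_of_add_add_eq_zero h2 (smul_mem_frobeniusCurve hu a)
    (smul_mem_frobeniusCurve hv b) (smul_mem_frobeniusCurve hw c)
    (by simpa [hbc.2] using hw0) h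
  have hveq : v = (b⁻¹ * t * c) • w := by rw [mul_smul, mul_smul, ← ht, inv_smul_smul₀ hbc.1]
  refine hvw _ (fun hs ↦ hv0 ?_) hveq
  rw [hveq, hs, zero_smul, Prod.fst_zero]

end FrobeniusCurve

theorem union_veronese_is_cap_odd_general
    (q : ℕ) (F K : Type*) [Field F] [Field K]
    [Fintype F] [Algebra F K]
    (hF : Fintype.card F = q) (hodd : Odd q)
    (u v w : K × K)
    (hu : ∃ x : K, x ≠ 0 ∧ (u = (x ^ 2, x ^ (q + 1)) ∨ u = (x ^ 2, -x ^ (q + 1))))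
    (hv : ∃ x : K, x ≠ 0 ∧ (v = (x ^ 2, x ^ (q + 1)) ∨ v = (x ^ 2, -x ^ (q + 1))))
    (hw : ∃ x : K, x ≠ 0 ∧ (w = (x ^ 2, x ^ (q + 1)) ∨ w = (x ^ 2, -x ^ (q + 1))))
    (hprop : ∀ c : F, c ≠ 0 → u ≠ c • v ∧ u ≠ c • w ∧ v ≠ c • w) :
    LinearIndependent F ![u, v, w] := by
  subst hF
  have h2 : (2 : K) ≠ 0 := FiniteField.two_ne_zero_of_odd_card (F := F) hodd
  obtain ⟨hu, hu1⟩ := mem_frobeniusCurve_and_fst_ne_zero hu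
  obtain ⟨hv, hv1⟩ := mem_frobeniusCurve_and_fst_ne_zero hv
  obtain ⟨hw, hw1⟩ := mem_frobeniusCurve_and_fst_ne_zero hw
  rw [Fintype.linearIndependent_iff]
  intro g hg
  simp only [Fin.sum_univ_three, Matrix.cons_val_zero, Matrix.cons_val_one,
    Matrix.cons_val_two, Matrix.head_cons, Matrix.tail_cons] at hg
  have h12 := eq_zero_or_eq_zero_of_smul_add_smul_add_smul_eq_zero h2 hu hv hw hv1 hw1
    (fun c hc ↦ (hprop c hc).2.2) hg
  have h02 := eq_zero_or_eq_zero_of_smul_add_smul_add_smul_eq_zero h2 hv hu hw hu1 hw1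
    (fun c hc ↦ (hprop c hc).2.1) (by rw [← hg]; abel)
  have h01 := eq_zero_or_eq_zero_of_smul_add_smul_add_smul_eq_zero h2 hw hu hv hu1 hv1
    (fun c hc ↦ (hprop c hc).1) (by rw [← hg]; abel)
  have smul_eq_zero_iff {a : F} {p : K × K} (hp : p.1 ≠ 0) : a • p = 0 ↔ a = 0 :=
    smul_eq_zero_iff_left fun h ↦ hp (by rw [h, Prod.fst_zero])
  rcases h12 with h | h <;> rcases h02 with h' | h' <;> rcases h01 with h'' | h'' <;>
    intro i <;> fin_cases i <;> simp_all

/-- Proposition: for `q` odd, `𝒱₁ ∪ 𝒱₋₁` is a cap: if `u, v, w` are vectors of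
the form `(x², ±x^{q+1})`, `x ≠ 0`, no two of which are `F`-proportional, then
they are `F`-linearly independent. -/
theorem union_veronese_is_cap_odd
    (q n : ℕ) (hn : 1 ≤ n) (F K : Type*) [Field F] [Field K]
    [Fintype F] [Fintype K] [Algebra F K]
    (hF : Fintype.card F = q) (hodd : Odd q)
    (hK : Module.finrank F K = 2 * n + 1)
    (u v w : K × K)
    (hu : ∃ x : K, x ≠ 0 ∧ (u = (x ^ 2, x ^ (q + 1)) ∨ u = (x ^ 2, -x ^ (q + 1))))
    (hv : ∃ x : K, x ≠ 0 ∧ (v = (x ^ 2, x ^ (q + 1)) ∨ v = (x ^ 2, -x ^ (q + 1))))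
    (hw : ∃ x : K, x ≠ 0 ∧ (w = (x ^ 2, x ^ (q + 1)) ∨ w = (x ^ 2, -x ^ (q + 1))))
    (hprop : ∀ c : F, c ≠ 0 → u ≠ c • v ∧ u ≠ c • w ∧ v ≠ c • w) :
    LinearIndependent F ![u, v, w] :=
  union_veronese_is_cap_odd_general q F K hF hodd u v w hu hv hw hprop
end

section
/- Let q > 2 be an even prime power, F a finite field with q elements, K an extension field of F with [K:F] = 2n+1 (n ≥ 1), and let α ∈ F with α ≠ 0 and α ≠ 1. Let S ⊆ K × K be the set S = { (x^2, x^{q+1}) : x ∈ K \ {0} } ∪ { (x^2, α·x^{q+1}) : x ∈ K \ {0} } (α identified with its image in K). If u, v, w ∈ S are such that no two of u, v, w are F-proportional (i.e. none is a nonzero F-scalar multiple of another), then u, v, w are linearly independent over F. -/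
/-!
In characteristic 2 every element of `F` is a square, and
`s² (x², ω x^{q+1}) = ((s x)², ω (s x)^{q+1})` for `s ∈ F`, so the coefficients of a dependence
`u = a v + b w` can be absorbed into the points.
A relation `(X², ω₁ X^{q+1}) + (Y², ω₂ Y^{q+1}) + (Z², ω₃ Z^{q+1}) = 0` forces `Z = X + Y`, and
then `t = X / Y` satisfies an equation in `N(t) = t^{q+1}` and `t^q + t`. Two of the `ωᵢ` agree.
If all three do, `t^q = t`, so `t ∈ F` and `u, v` are proportional. If only `ω₁ = ω₂`, the equation
reads `N((ω₁ + ω₃) t + ω₃) = N(ω₁)`; since `gcd(q + 1, q^{2n+1} - 1) = 1`, `N` is injective on `K`,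
so `t = 1`. Otherwise `t^q + t` is a nonzero `δ ∈ F`, impossible because the trace of `t^q + t`
vanishes while that of `δ` is `(2n + 1) δ = δ`.
-/

open FiniteField Module

theorem Nat.coprime_pow_sub_one_add_one {q d : ℕ} (hq : Even q) (hd : Odd d) :
    Nat.Coprime (q ^ d - 1) (q + 1) := by
  rcases Nat.eq_zero_or_pos q with rfl | hq0
  · simp
  obtain ⟨m, hm⟩ : q + 1 ∣ q ^ d + 1 := by
    simpa using Odd.nat_add_dvd_pow_add_pow q 1 hd
  obtain ⟨r, hr⟩ := hq
  rw [← Nat.isCoprime_iff_coprime, Nat.cast_sub (Nat.one_le_pow _ _ hq0)]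
  refine ⟨r, 1 - r * m, ?_⟩
  have hm' : (q : ℤ) ^ d + 1 = (q + 1) * m := mod_cast hm
  have hr' : (q : ℤ) = r + r := mod_cast hr
  push_cast
  linear_combination (r : ℤ) * hm' + hr'

theorem pow_injective_of_coprime_card_sub_one {K : Type*} [Field K] [Fintype K] {k : ℕ}
    (hk0 : k ≠ 0) (hk : (Fintype.card K - 1).Coprime k) :
    Function.Injective fun x : K => x ^ k := by
  classical
  intro s t (hst : s ^ k = t ^ k)
  rcases eq_or_ne s 0 with rfl | hs
  · exact ((pow_eq_zero_iff hk0).mp (by rw [← hst, zero_pow hk0])).symm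
  have ht : t ≠ 0 := fun ht => hs ((pow_eq_zero_iff hk0).mp (by rw [hst, ht, zero_pow hk0]))
  have hcard : (Nat.card Kˣ).Coprime k := by rwa [Nat.card_eq_fintype_card, Fintype.card_units]
  have := (powCoprime hcard).injective (a₁ := Units.mk0 s hs) (a₂ := Units.mk0 t ht)
    (Units.ext (by simpa using hst))
  simpa using congrArg Units.val this

theorem linearIndependent_triple_of_forall_ne {F V : Type*} [Field F] [AddCommGroup V]
    [Module F V] {u v w : V} (hu : u ≠ 0) (hv : v ≠ 0) (hw : w ≠ 0)
    (huv : ∀ c : F, c ≠ 0 → u ≠ c • v) (huw : ∀ c : F, c ≠ 0 → u ≠ c • w)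
    (hvw : ∀ c : F, c ≠ 0 → v ≠ c • w)
    (huvw : ∀ a b : F, a ≠ 0 → b ≠ 0 → u ≠ a • v + b • w) :
    LinearIndependent F ![u, v, w] := by
  refine linearIndependent_finCons.mpr ⟨linearIndependent_fin2.mpr ⟨hw, fun c h => ?_⟩, ?_⟩
  · rcases eq_or_ne c 0 with rfl | hc
    · exact hv (by simpa using h.symm)
    · exact hvw c hc h.symm
  · rw [Matrix.range_cons, Matrix.range_cons, Matrix.range_empty, Set.union_empty,
      Set.singleton_union, Submodule.mem_span_pair]
    rintro ⟨a, b, h⟩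
    rcases eq_or_ne a 0 with rfl | ha
    · rcases eq_or_ne b 0 with rfl | hb
      · exact hu (by simpa using h.symm)
      · exact huw b hb (by simpa using h.symm)
    rcases eq_or_ne b 0 with rfl | hb
    · exact huv a ha (by simpa using h.symm)
    · exact huvw a b ha hb h.symm

section Veronese

variable {F K : Type*} [Field F] [Field K] [Algebra F K]

section FiniteField

variable [Fintype F]

open Polynomial in
theorem exists_algebraMap_eq_of_pow_card_eq_self {t : K} (ht : t ^ Fintype.card F = t) :
    ∃ c : F, algebraMap F K c = t := by
  have hq := Fintype.one_lt_card (α := F)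
  have hmonic : (X ^ Fintype.card F - X : F[X]).Monic :=
    monic_X_pow_sub (by rw [degree_X]; exact_mod_cast hq)
  have hroots := hmonic.roots_map_of_card_eq_natDegree (algebraMap F K) (by
    rw [roots_X_pow_card_sub_X, X_pow_card_sub_X_natDegree_eq F hq]; rfl)
  have hmem : t ∈ (map (algebraMap F K) (X ^ Fintype.card F - X)).roots := by
    rw [mem_roots (hmonic.map _).ne_zero]
    simp [ht]
  rw [← hroots, roots_X_pow_card_sub_X] at hmem
  simpa using hmem

theorem add_one_pow_card_add_one (t : K) :
    (t + 1) ^ (Fintype.card F + 1) = t ^ (Fintype.card F + 1) + t ^ Fintype.card F + t + 1 := by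
  have h := map_add (frobeniusAlgHom F K) t 1
  rw [map_one, frobeniusAlgHom_apply, frobeniusAlgHom_apply] at h
  rw [pow_succ, h]
  ring

variable [Fintype K]

-- `[K : F] c` is the trace of `c`, and the trace of `t ^ q - t` vanishes
theorem finrank_mul_eq_zero_of_pow_card_sub_self {t : K} {c : F}
    (h : t ^ Fintype.card F - t = algebraMap F K c) : (finrank F K : F) * c = 0 := by
  set φ := frobeniusAlgHom F K
  have hiter : ∀ k : ℕ, φ^[k] t = t + algebraMap F K (k * c) := by
    intro k
    induction k with
    | zero => simp
    | succ k ih =>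
      rw [Function.iterate_succ_apply', ih, map_add, AlgHom.commutes, frobeniusAlgHom_apply,
        sub_eq_iff_eq_add'.mp h]
      push_cast
      ring
  have hid : φ^[finrank F K] t = t := by
    rw [coe_frobeniusAlgHom, pow_iterate, ← card_eq_pow_finrank]
    exact pow_card t
  rw [hiter, add_eq_left, map_eq_zero] at hid
  exact hid

theorem pow_card_add_one_injective [CharP F 2] (hK : Odd (finrank F K)) :
    Function.Injective fun x : K => x ^ (Fintype.card F + 1) := by
  refine pow_injective_of_coprime_card_sub_one (Nat.succ_ne_zero _) ?_
  rw [card_eq_pow_finrank (K := F)]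
  exact Nat.coprime_pow_sub_one_add_one
    (Nat.even_iff.mpr (even_card_of_char_two (ringChar.eq F 2))) hK

end FiniteField

def veronesePoint (q : ℕ) (ω : F) (x : K) : K × K :=
  (x ^ 2, algebraMap F K ω * x ^ (q + 1))

/-- `veronesePoint q ω₁ X + veronesePoint q ω₂ Y + veronesePoint q ω₃ (X + Y)` has second
coordinate `Y ^ (q + 1) * veroneseForm q ω₁ ω₂ ω₃ (X / Y)`. -/
def veroneseForm (q : ℕ) (ω₁ ω₂ ω₃ : F) (t : K) : K :=
  algebraMap F K ω₁ * t ^ (q + 1) + algebraMap F K ω₂ + algebraMap F K ω₃ * (t + 1) ^ (q + 1)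

theorem veronesePoint_ne_zero {q : ℕ} {ω : F} {x : K} (hx : x ≠ 0) : veronesePoint q ω x ≠ 0 :=
  fun h => pow_ne_zero 2 hx (congrArg Prod.fst h)

theorem sq_smul_veronesePoint [Fintype F] (s ω : F) (x : K) :
    s ^ 2 • veronesePoint (Fintype.card F) ω x =
      veronesePoint (Fintype.card F) ω (algebraMap F K s * x) := by
  have hs : algebraMap F K s ^ (Fintype.card F + 1) = algebraMap F K (s ^ 2) := by
    rw [← map_pow, pow_succ, pow_card, sq]
  rw [veronesePoint, veronesePoint, Prod.smul_mk, Algebra.smul_def, Algebra.smul_def, mul_pow,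
    mul_pow, hs, map_pow]
  ext <;> ring

theorem veroneseForm_div_eq_zero [CharP K 2] {q : ℕ} {ω₁ ω₂ ω₃ : F} {X Y Z : K} (hY : Y ≠ 0)
    (h : veronesePoint q ω₁ X + veronesePoint q ω₂ Y + veronesePoint q ω₃ Z = 0) :
    veroneseForm q ω₁ ω₂ ω₃ (X / Y) = 0 := by
  simp only [veronesePoint, Prod.mk_add_mk, Prod.mk_eq_zero] at h
  obtain ⟨hsq, hpow⟩ := h
  have hZ : Z = X + Y := by
    rw [← CharTwo.add_eq_zero, ← pow_eq_zero_iff two_ne_zero, CharTwo.add_sq, CharTwo.add_sq]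
    linear_combination hsq
  rw [hZ, ← div_mul_cancel₀ X hY, ← add_one_mul, mul_pow, mul_pow] at hpow
  apply mul_right_cancel₀ (pow_ne_zero (q + 1) hY)
  unfold veroneseForm
  linear_combination hpow

theorem exists_algebraMap_eq_of_veroneseForm_eq_zero [Fintype F] [CharP K 2] {ω : F} (hω : ω ≠ 0)
    {t : K} (h : veroneseForm (Fintype.card F) ω ω ω t = 0) : ∃ c : F, algebraMap F K c = t := by
  have h2 : (2 : K) = 0 := CharTwo.two_eq_zero
  apply exists_algebraMap_eq_of_pow_card_eq_self
  rw [veroneseForm, add_one_pow_card_add_one] at h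
  have : algebraMap F K ω * (t ^ Fintype.card F + t) = 0 := by
    linear_combination h - algebraMap F K ω * (t ^ (Fintype.card F + 1) + 1) * h2
  rw [mul_eq_zero, map_eq_zero, CharTwo.add_eq_zero] at this
  exact this.resolve_left hω

section CharTwo

variable [Fintype F] [Fintype K] [CharP F 2]

theorem eq_one_of_veroneseForm_eq_zero (hK : Odd (finrank F K)) {ω ω₃ : F} (hω : ω ≠ ω₃)
    {t : K} (h : veroneseForm (Fintype.card F) ω ω ω₃ t = 0) : t = 1 := by
  have : CharP K 2 := charP_of_injective_algebraMap (algebraMap F K).injective 2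
  have h2 : (2 : K) = 0 := CharTwo.two_eq_zero
  have hs : algebraMap F K (ω + ω₃) ≠ 0 := by
    rwa [_root_.map_ne_zero, Ne, CharTwo.add_eq_zero]
  rw [veroneseForm, add_one_pow_card_add_one] at h
  -- the form is `(ω + ω₃) t ^ (q + 1) + ω₃ (t ^ q + t) + (ω + ω₃)`, which completes to a norm
  have hnorm : (algebraMap F K (ω + ω₃) * t + algebraMap F K ω₃) ^ (Fintype.card F + 1) =
      algebraMap F K ω ^ (Fintype.card F + 1) := by
    have hfrob := map_add (frobeniusAlgHom F K) (algebraMap F K (ω + ω₃) * t) (algebraMap F K ω₃)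
    simp only [frobeniusAlgHom_apply, map_mul, AlgHom.commutes] at hfrob
    rw [pow_succ, hfrob, ← map_pow, pow_succ, pow_card, map_add, map_mul]
    linear_combination (algebraMap F K ω + algebraMap F K ω₃) * h
      - (algebraMap F K ω₃ + algebraMap F K ω) * algebraMap F K ω * h2
  have hlin := pow_card_add_one_injective hK hnorm
  rw [map_add] at hlin hs
  apply mul_left_cancel₀ hs
  linear_combination hlin - algebraMap F K ω₃ * h2

-- otherwise `t ^ q - t = (ω₁ + ω₂) / ω₁ ≠ 0`, whose trace `[K : F] (ω₁ + ω₂) / ω₁` is nonzero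
theorem veroneseForm_ne_zero (hK : Odd (finrank F K)) {ω₁ ω₂ : F} (hω₁ : ω₁ ≠ 0)
    (hω : ω₁ ≠ ω₂) (t : K) : veroneseForm (Fintype.card F) ω₁ ω₂ ω₁ t ≠ 0 := by
  have : CharP K 2 := charP_of_injective_algebraMap (algebraMap F K).injective 2
  have h2 : (2 : K) = 0 := CharTwo.two_eq_zero
  intro h
  rw [veroneseForm, add_one_pow_card_add_one] at h
  have hAS : t ^ Fintype.card F - t = algebraMap F K ((ω₁ + ω₂) / ω₁) := by
    rw [map_div₀, eq_div_iff ((_root_.map_ne_zero _).mpr hω₁), map_add]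
    linear_combination h - (algebraMap F K ω₁ * (t ^ (Fintype.card F + 1) + t + 1) +
      algebraMap F K ω₂) * h2
  have htrace := finrank_mul_eq_zero_of_pow_card_sub_self hAS
  rw [natCast_eq_one_of_odd_of_two_eq_zero hK CharTwo.two_eq_zero, one_mul, div_eq_zero_iff,
    CharTwo.add_eq_zero] at htrace
  exact hω (htrace.resolve_right hω₁)

theorem eq_and_exists_eq_algebraMap_mul_of_veronesePoint_add_eq_zero (hK : Odd (finrank F K))
    {ω₁ ω₂ ω₃ : F} (hω₁ : ω₁ ≠ 0) (hω₂ : ω₂ ≠ 0) (hω : ω₁ = ω₂ ∨ ω₃ = ω₁ ∨ ω₃ = ω₂)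
    {X Y Z : K} (hX : X ≠ 0) (hY : Y ≠ 0)
    (h : veronesePoint (Fintype.card F) ω₁ X + veronesePoint (Fintype.card F) ω₂ Y +
      veronesePoint (Fintype.card F) ω₃ Z = 0) :
    ω₁ = ω₂ ∧ ∃ c : F, X = algebraMap F K c * Y := by
  have : CharP K 2 := charP_of_injective_algebraMap (algebraMap F K).injective 2
  obtain rfl : ω₁ = ω₂ := by
    rcases hω with h12 | rfl | rfl
    · exact h12
    · by_contra h12
      exact veroneseForm_ne_zero hK hω₁ h12 _ (veroneseForm_div_eq_zero hY h)
    · by_contra h12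
      rw [add_comm (veronesePoint _ ω₁ X)] at h
      exact veroneseForm_ne_zero hK hω₂ (Ne.symm h12) _ (veroneseForm_div_eq_zero hX h)
  refine ⟨rfl, ?_⟩
  have hform := veroneseForm_div_eq_zero hY h
  by_cases h13 : ω₁ = ω₃
  · subst h13
    obtain ⟨c, hc⟩ := exists_algebraMap_eq_of_veroneseForm_eq_zero hω₁ hform
    exact ⟨c, by rw [hc, div_mul_cancel₀ X hY]⟩
  · refine ⟨1, ?_⟩
    rw [map_one, ← eq_one_of_veroneseForm_eq_zero hK h13 hform, div_mul_cancel₀ X hY]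

theorem exists_veronesePoint_eq_smul_of_eq_add_smul (hK : Odd (finrank F K))
    {ω₁ ω₂ ω₃ : F} (hω₁ : ω₁ ≠ 0) (hω₂ : ω₂ ≠ 0) (hω : ω₁ = ω₂ ∨ ω₃ = ω₁ ∨ ω₃ = ω₂)
    {x y z : K} (hx : x ≠ 0) (hy : y ≠ 0) {a b : F} (ha : a ≠ 0) (hb : b ≠ 0)
    (h : veronesePoint (Fintype.card F) ω₁ x =
      a • veronesePoint (Fintype.card F) ω₂ y + b • veronesePoint (Fintype.card F) ω₃ z) :
    ∃ c : F, c ≠ 0 ∧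
      veronesePoint (Fintype.card F) ω₁ x = c • veronesePoint (Fintype.card F) ω₂ y := by
  have : CharP K 2 := charP_of_injective_algebraMap (algebraMap F K).injective 2
  -- every element of `F` is a square, so the coefficients can be absorbed into the points
  obtain ⟨s, rfl⟩ := isSquare_of_charTwo' a
  obtain ⟨r, rfl⟩ := isSquare_of_charTwo' b
  rw [← sq, ← sq, sq_smul_veronesePoint, sq_smul_veronesePoint] at h
  have hs : algebraMap F K s ≠ 0 := (_root_.map_ne_zero _).mpr (left_ne_zero_of_mul ha)
  obtain ⟨rfl, c, hc⟩ := eq_and_exists_eq_algebraMap_mul_of_veronesePoint_add_eq_zero hK hω₁ hω₂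
    hω hx (mul_ne_zero hs hy) (by rw [h, add_assoc, CharTwo.add_self_eq_zero])
  have hc0 : c ≠ 0 := by
    rintro rfl
    exact hx (by rw [hc, map_zero, zero_mul])
  refine ⟨(c * s) ^ 2, pow_ne_zero 2 (mul_ne_zero hc0 (left_ne_zero_of_mul ha)), ?_⟩
  rw [sq_smul_veronesePoint, hc, map_mul, mul_assoc]

end CharTwo

theorem exists_eq_veronesePoint {q : ℕ} {α : F} {u : K × K}
    (hu : ∃ x : K, x ≠ 0 ∧
      (u = (x ^ 2, x ^ (q + 1)) ∨ u = (x ^ 2, algebraMap F K α * x ^ (q + 1)))) :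
    ∃ x : K, x ≠ 0 ∧ ∃ ω : F, (ω = 1 ∨ ω = α) ∧ u = veronesePoint q ω x := by
  obtain ⟨x, hx, rfl | rfl⟩ := hu
  · exact ⟨x, hx, 1, Or.inl rfl, by rw [veronesePoint, map_one, one_mul]⟩
  · exact ⟨x, hx, α, Or.inr rfl, rfl⟩

end Veronese

theorem union_veronese_is_cap_even_general
    (q n : ℕ) (F K : Type*) [Field F] [Field K]
    [Fintype F] [Fintype K] [Algebra F K]
    (hF : Fintype.card F = q) (heven : Even q)
    (hK : Module.finrank F K = 2 * n + 1)
    (α : F) (hα0 : α ≠ 0)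
    (u v w : K × K)
    (hu : ∃ x : K, x ≠ 0 ∧
      (u = (x ^ 2, x ^ (q + 1)) ∨ u = (x ^ 2, algebraMap F K α * x ^ (q + 1))))
    (hv : ∃ x : K, x ≠ 0 ∧
      (v = (x ^ 2, x ^ (q + 1)) ∨ v = (x ^ 2, algebraMap F K α * x ^ (q + 1))))
    (hw : ∃ x : K, x ≠ 0 ∧
      (w = (x ^ 2, x ^ (q + 1)) ∨ w = (x ^ 2, algebraMap F K α * x ^ (q + 1))))
    (hprop : ∀ c : F, c ≠ 0 → u ≠ c • v ∧ u ≠ c • w ∧ v ≠ c • w) :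
    LinearIndependent F ![u, v, w] := by
  subst hF
  have : CharP F 2 := ringChar.of_eq (even_card_iff_char_two.mpr (Nat.even_iff.mp heven))
  have hodd : Odd (finrank F K) := hK ▸ odd_two_mul_add_one n
  obtain ⟨x, hx, ω₁, hω₁, rfl⟩ := exists_eq_veronesePoint hu
  obtain ⟨y, hy, ω₂, hω₂, rfl⟩ := exists_eq_veronesePoint hv
  obtain ⟨z, hz, ω₃, hω₃, rfl⟩ := exists_eq_veronesePoint hw
  have hne : ∀ ω : F, ω = 1 ∨ ω = α → ω ≠ 0 := by
    rintro _ (rfl | rfl)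
    exacts [one_ne_zero, hα0]
  have htwo : ω₁ = ω₂ ∨ ω₃ = ω₁ ∨ ω₃ = ω₂ := by
    rcases hω₁ with rfl | rfl <;> rcases hω₂ with rfl | rfl <;> rcases hω₃ with rfl | rfl <;> simp
  refine linearIndependent_triple_of_forall_ne (veronesePoint_ne_zero hx)
    (veronesePoint_ne_zero hy) (veronesePoint_ne_zero hz) (fun c hc => (hprop c hc).1)
    (fun c hc => (hprop c hc).2.1) (fun c hc => (hprop c hc).2.2) fun a b ha hb hab => ?_
  obtain ⟨c, hc, huv⟩ := exists_veronesePoint_eq_smul_of_eq_add_smul hodd (hne ω₁ hω₁)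
    (hne ω₂ hω₂) htwo hx hy ha hb hab
  exact (hprop c hc).1 huv

/-- Proposition: for `q > 2` even and `α ∈ F \ {0, 1}`, `𝒱₁ ∪ 𝒱_α` is a cap:
if `u, v, w` are vectors of the form `(x², x^{q+1})` or `(x², α x^{q+1})`,
`x ≠ 0`, no two of which are `F`-proportional, then they are `F`-linearly
independent. -/
theorem union_veronese_is_cap_even
    (q n : ℕ) (hn : 1 ≤ n) (F K : Type*) [Field F] [Field K]
    [Fintype F] [Fintype K] [Algebra F K]
    (hF : Fintype.card F = q) (heven : Even q) (hq2 : 2 < q)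
    (hK : Module.finrank F K = 2 * n + 1)
    (α : F) (hα0 : α ≠ 0) (hα1 : α ≠ 1)
    (u v w : K × K)
    (hu : ∃ x : K, x ≠ 0 ∧
      (u = (x ^ 2, x ^ (q + 1)) ∨ u = (x ^ 2, algebraMap F K α * x ^ (q + 1))))
    (hv : ∃ x : K, x ≠ 0 ∧
      (v = (x ^ 2, x ^ (q + 1)) ∨ v = (x ^ 2, algebraMap F K α * x ^ (q + 1))))
    (hw : ∃ x : K, x ≠ 0 ∧
      (w = (x ^ 2, x ^ (q + 1)) ∨ w = (x ^ 2, algebraMap F K α * x ^ (q + 1))))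
    (hprop : ∀ c : F, c ≠ 0 → u ≠ c • v ∧ u ≠ c • w ∧ v ≠ c • w) :
    LinearIndependent F ![u, v, w] :=
  union_veronese_is_cap_even_general q n F K hF heven hK α hα0 u v w hu hv hw hprop
end

section
/- Let q > 2 be an even prime power, F a finite field with q elements, K an extension field of F with [K:F] = 2n+1 (n ≥ 1), and let α ∈ F with α ≠ 0 and α ≠ 1. Let (a,b) ∈ K × K with (a,b) ≠ (0,0), and suppose that for all x ∈ K \ {0} and c ∈ F \ {0} one has (a,b) ≠ (c·x^2, c·x^{q+1}) and (a,b) ≠ (c·x^2, c·α·x^{q+1}). Then there exist x, y ∈ K \ {0} and c, d ∈ F \ {0} such that a = c·x^2 + d·y^2 and b = c·x^{q+1} + d·α·y^{q+1}. -/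
/-!
In characteristic 2 squaring is a bijection of `K`, so a pair `(a, b)` with
`b ^ 2 = θ ^ 2 * a ^ (q + 1)` is `(x ^ 2, θ * x ^ (q + 1))` for some `x`: every point of the
cones `𝒱₁` and `𝒱_α` is represented with `c = 1`. Hence `(a, b)` lies on a secant through
`(u, v) ∈ 𝒱₁` and a point of `𝒱_α` as soon as `b ^ 2 + u ^ (q + 1) = α ^ 2 * (a + u) ^ (q + 1)`.
Writing `u = w + Γ a` with `Γ = α ^ 2 / (1 + α ^ 2) ∈ F` turns this into an equation
`w ^ (q + 1) = const`, which is solvable because `q + 1` is prime to `q ^ (2n+1) - 1`.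
Since `(a, b)` lies on neither cone, neither endpoint is the zero vector.
-/

open Function

theorem Nat.coprime_add_one_pow_sub_one {q k : ℕ} (hq : Even q) (hk : Odd k) :
    (q + 1).Coprime (q ^ k - 1) := by
  rcases Nat.eq_zero_or_pos (q ^ k) with hqk | hqk
  · simp [(Nat.pow_eq_zero.1 hqk).1]
  have hdvd2 : (q + 1).gcd (q ^ k - 1) ∣ 2 := by
    have hsum : (q + 1).gcd (q ^ k - 1) ∣ q ^ k + 1 := by
      simpa using (Nat.gcd_dvd_left _ _).trans (hk.nat_add_dvd_pow_add_pow q 1)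
    simpa [show q ^ k + 1 - (q ^ k - 1) = 2 by omega] using
      Nat.dvd_sub hsum (Nat.gcd_dvd_right _ _)
  exact Nat.Coprime.eq_one_of_dvd (hq.add_one.coprime_two_right.coprime_dvd_left
    (Nat.gcd_dvd_left _ _)) hdvd2

theorem FiniteField.pow_surjective_of_coprime {K : Type*} [Field K] [Fintype K] {e : ℕ}
    (he : (Fintype.card K - 1).Coprime e) (he0 : e ≠ 0) : Surjective (· ^ e : K → K) := by
  intro z
  rcases eq_or_ne z 0 with rfl | hz
  · exact ⟨0, zero_pow he0⟩
  have hunits : (Nat.card Kˣ).Coprime e := by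
    rwa [Nat.card_units, Nat.card_eq_fintype_card]
  obtain ⟨w, hw⟩ := hunits.pow_left_bijective.2 (Units.mk0 z hz)
  exact ⟨w, by simpa using congrArg Units.val hw⟩

theorem CharTwo.exists_eq_sq_of_sq_eq_mul_pow {K : Type*} [Field K] [Finite K] [CharP K 2]
    {θ a b : K} (e : ℕ) (h : b ^ 2 = θ ^ 2 * a ^ e) : ∃ x, a = x ^ 2 ∧ b = θ * x ^ e := by
  obtain ⟨x, rfl⟩ := surjective_frobenius K 2 a
  refine ⟨x, frobenius_def .., frobenius_inj K 2 ?_⟩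
  simp only [frobenius_def, h]
  ring

/-- `G = A ^ 2 / (1 + A ^ 2)` is the shift that cancels the cross terms `φ a * u + a * φ u`
in `A ^ 2 * N (a + u) - N u`, where `N x = φ x * x`. -/
theorem CharTwo.secant_identity {R : Type*} [CommRing R] [CharP R 2] (φ : R →+* R)
    {A G a b w : R} (hG : G * (1 + A ^ 2) = A ^ 2) (hφG : φ G = G)
    (hw : (1 + A ^ 2) * (φ w * w) = G * (φ a * a) + b ^ 2) :
    b ^ 2 + φ (w + G * a) * (w + G * a) =
      A ^ 2 * (φ (a + (w + G * a)) * (a + (w + G * a))) := by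
  have h2 : (2 : R) = 0 := CharTwo.two_eq_zero
  simp only [map_add, map_mul, hφG]
  linear_combination hw - (φ w * a + φ a * w + (3 + G) * φ a * a) * hG
    + (b ^ 2 - A ^ 2 * φ w * w + (G - A ^ 2) * (φ w * a + φ a * w)
      + (2 * G + G ^ 2 - 2 * A ^ 2) * φ a * a) * h2

theorem exists_sq_add_pow_eq_sq_mul_pow {F K : Type*} [Field F] [Fintype F] [Field K]
    [Algebra F K] [CharP K 2] {α : F} (hα : α ≠ 1)
    (hsurj : Surjective (· ^ (Fintype.card F + 1) : K → K)) (a b : K) :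
    ∃ u : K, b ^ 2 + u ^ (Fintype.card F + 1) =
      algebraMap F K α ^ 2 * (a + u) ^ (Fintype.card F + 1) := by
  set A := algebraMap F K α
  have hS : 1 + A ^ 2 ≠ 0 := by
    intro h0
    have hA1 : (A - 1) ^ 2 = 0 := by linear_combination h0 - A * CharTwo.two_eq_zero (R := K)
    exact hα ((algebraMap F K).injective (by simpa [sub_eq_zero, A] using hA1))
  set G := A ^ 2 / (1 + A ^ 2)
  let φ : K →+* K := FiniteField.frobeniusAlgHom F K
  have hφA : φ A = A := (FiniteField.frobeniusAlgHom F K).commutes α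
  have hφG : φ G = G := by simp only [G, map_div₀, map_add, map_one, map_pow, hφA]
  have hN (x : K) : x ^ (Fintype.card F + 1) = φ x * x := pow_succ x _
  obtain ⟨w, hw⟩ := hsurj ((G * a ^ (Fintype.card F + 1) + b ^ 2) / (1 + A ^ 2))
  refine ⟨w + G * a, ?_⟩
  simp only [hN] at hw ⊢
  exact CharTwo.secant_identity φ (div_mul_cancel₀ _ hS) hφG (by rw [hw]; field_simp)

theorem point_on_secant_even_general
    (q n : ℕ) (F K : Type*) [Field F] [Field K]
    [Fintype F] [Fintype K] [Algebra F K]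
    (hF : Fintype.card F = q) (heven : Even q)
    (hK : Module.finrank F K = 2 * n + 1)
    (α : F) (hα1 : α ≠ 1)
    (a b : K) (hab : (a, b) ≠ (0, 0))
    (h : ∀ x : K, x ≠ 0 → ∀ c : F, c ≠ 0 →
      (a, b) ≠ (algebraMap F K c * x ^ 2, algebraMap F K c * x ^ (q + 1)) ∧
      (a, b) ≠ (algebraMap F K c * x ^ 2,
        algebraMap F K c * algebraMap F K α * x ^ (q + 1))) :
    ∃ x y : K, x ≠ 0 ∧ y ≠ 0 ∧ ∃ c d : F, c ≠ 0 ∧ d ≠ 0 ∧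
      a = algebraMap F K c * x ^ 2 + algebraMap F K d * y ^ 2 ∧
      b = algebraMap F K c * x ^ (q + 1) +
        algebraMap F K d * algebraMap F K α * y ^ (q + 1) := by
  have : CharP F 2 := ringChar.eq_iff.mp <|
    FiniteField.even_card_iff_char_two.mpr (Nat.even_iff.mp (hF ▸ heven))
  have : CharP K 2 := charP_of_injective_algebraMap (algebraMap F K).injective 2
  have h2 : (2 : K) = 0 := CharTwo.two_eq_zero
  have hsurj : Surjective (· ^ (q + 1) : K → K) :=
    FiniteField.pow_surjective_of_coprime (by
      rw [Module.card_eq_pow_finrank (K := F), hK, hF]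
      exact (Nat.coprime_add_one_pow_sub_one heven (odd_two_mul_add_one n)).symm) (by omega)
  obtain ⟨u, hu⟩ := exists_sq_add_pow_eq_sq_mul_pow hα1 (hF ▸ hsurj) a b
  rw [hF] at hu
  obtain ⟨x, rfl⟩ := surjective_frobenius K 2 u
  obtain ⟨y, hay, hby⟩ := CharTwo.exists_eq_sq_of_sq_eq_mul_pow (θ := algebraMap F K α)
    (a := a + x ^ 2) (b := b + x ^ (q + 1)) (q + 1) (by
      rw [frobenius_def] at hu
      linear_combination hu + b * x ^ (q + 1) * h2)
  have ha : a = x ^ 2 + y ^ 2 := by linear_combination hay - x ^ 2 * h2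
  have hb : b = x ^ (q + 1) + algebraMap F K α * y ^ (q + 1) := by
    linear_combination hby - x ^ (q + 1) * h2
  refine ⟨x, y, ?_, ?_, 1, 1, one_ne_zero, one_ne_zero, by simp [ha], by simp [hb]⟩
  · rintro rfl
    have hy : y ≠ 0 := by rintro rfl; simp [ha, hb] at hab
    exact (h y hy 1 one_ne_zero).2 (by simp [ha, hb])
  · rintro rfl
    have hx : x ≠ 0 := by rintro rfl; simp [ha, hb] at hab
    exact (h x hx 1 one_ne_zero).1 (by simp [ha, hb])

/-- Theorem (completeness, even case): for `q > 2` even and `α ∈ F \ {0, 1}`,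
every point of `ℙ(K × K)` outside `𝒱₁ ∪ 𝒱_α` lies on a line joining a point of
`𝒱₁` and a point of `𝒱_α`. -/
theorem point_on_secant_even
    (q n : ℕ) (hn : 1 ≤ n) (F K : Type*) [Field F] [Field K]
    [Fintype F] [Fintype K] [Algebra F K]
    (hF : Fintype.card F = q) (heven : Even q) (hq2 : 2 < q)
    (hK : Module.finrank F K = 2 * n + 1)
    (α : F) (hα0 : α ≠ 0) (hα1 : α ≠ 1)
    (a b : K) (hab : (a, b) ≠ (0, 0))
    (h : ∀ x : K, x ≠ 0 → ∀ c : F, c ≠ 0 →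
      (a, b) ≠ (algebraMap F K c * x ^ 2, algebraMap F K c * x ^ (q + 1)) ∧
      (a, b) ≠ (algebraMap F K c * x ^ 2,
        algebraMap F K c * algebraMap F K α * x ^ (q + 1))) :
    ∃ x y : K, x ≠ 0 ∧ y ≠ 0 ∧ ∃ c d : F, c ≠ 0 ∧ d ≠ 0 ∧
      a = algebraMap F K c * x ^ 2 + algebraMap F K d * y ^ 2 ∧
      b = algebraMap F K c * x ^ (q + 1) +
        algebraMap F K d * algebraMap F K α * y ^ (q + 1) :=
  point_on_secant_even_general q n F K hF heven hK α hα1 a b hab h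
end

section
/- Let q be an odd prime power, F a finite field with q elements, and K an extension field of F with [K:F] = 3. For a_0, a_1 ∈ K let M(a_0, a_1) be the 3×3 symmetric matrix over K given by M(a_0,a_1) = [[a_0, a_1, a_1^{q^2}], [a_1, a_0^q, a_1^q], [a_1^{q^2}, a_1^q, a_0^{q^2}]]. If the matrix M(a_0, a_1) has rank at most 2 and the matrix M(a_0, -a_1) has rank at most 2, then a_0 = 0 and a_1 = 0. -/
/-!
The determinant of a symmetric `3 × 3` matrix is `a b c + 2 x y z - a y² - b z² - c x²`, and
only the term `2 x y z` is odd in the off-diagonal entries. For `M(a₀, ±a₁)` that term is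
`±2 a₁^(1 + q + q²)`, since `q` and `q²` are odd; subtracting the two determinants gives
`4 a₁^(1 + q + q²) = 0`, so `a₁ = 0` in odd characteristic. Then `M(a₀, 0)` is diagonal and its
determinant `a₀^(1 + q + q²)` vanishes as well.
-/

theorem Matrix.det_eq_zero_of_rank_lt {n R : Type*} [Fintype n] [DecidableEq n] [CommRing R]
    [IsDomain R] {A : Matrix n n R} (h : A.rank < Fintype.card n) : A.det = 0 :=
  by_contra fun hA => h.ne (rank_of_det_ne_zero hA)

theorem Matrix.det_symm_fin_three {R : Type*} [CommRing R] (a b c x y z : R) :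
    !![a, x, z; x, b, y; z, y, c].det =
      a * b * c + 2 * (x * y * z) - a * y ^ 2 - b * z ^ 2 - c * x ^ 2 := by
  rw [det_fin_three]
  simp only [of_apply, cons_val', cons_val_zero, cons_val_one, cons_val_two, empty_val',
    cons_val_fin_one, head_cons, head_fin_const, tail_cons]
  ring

theorem FiniteField.ringChar_ne_two_of_odd_card {F : Type*} [Field F] [Fintype F]
    (h : Odd (Fintype.card F)) : ringChar F ≠ 2 := by
  rw [Ne, even_card_iff_char_two, Nat.odd_iff.mp h]
  decide

theorem eq_zero_of_mul_pow_mul_pow_eq_zero {R : Type*} [MonoidWithZero R] [IsReduced R]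
    {a : R} {m n : ℕ} (h : a * a ^ m * a ^ n = 0) : a = 0 :=
  eq_zero_of_pow_eq_zero (n := 1 + m + n) (by rwa [pow_add, pow_add, pow_one])

theorem chordal_varieties_disjoint_odd_general
    (q : ℕ) (F K : Type*) [Field F] [Field K]
    [Fintype F] [Algebra F K]
    (hF : Fintype.card F = q) (hodd : Odd q)
    (a0 a1 : K)
    (h1 : (!![a0, a1, a1 ^ q ^ 2;
              a1, a0 ^ q, a1 ^ q;
              a1 ^ q ^ 2, a1 ^ q, a0 ^ q ^ 2] : Matrix (Fin 3) (Fin 3) K).rank ≤ 2)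
    (h2 : (!![a0, -a1, (-a1) ^ q ^ 2;
              -a1, a0 ^ q, (-a1) ^ q;
              (-a1) ^ q ^ 2, (-a1) ^ q, a0 ^ q ^ 2] : Matrix (Fin 3) (Fin 3) K).rank ≤ 2) :
    a0 = 0 ∧ a1 = 0 := by
  have det1 := Matrix.det_eq_zero_of_rank_lt (h1.trans_lt (by simp))
  have det2 := Matrix.det_eq_zero_of_rank_lt (h2.trans_lt (by simp))
  rw [hodd.neg_pow, (hodd.pow (n := 2)).neg_pow] at det2
  rw [Matrix.det_symm_fin_three] at det1 det2
  have hchar : ringChar K ≠ 2 :=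
    Algebra.ringChar_eq F K ▸ FiniteField.ringChar_ne_two_of_odd_card (hF ▸ hodd)
  have ha1 : a1 = 0 := by
    have h4 : (2 * 2 : K) * (a1 * a1 ^ q * a1 ^ q ^ 2) = 0 := by linear_combination det1 - det2
    have h2K := Ring.two_ne_zero hchar
    exact eq_zero_of_mul_pow_mul_pow_eq_zero ((mul_eq_zero.mp h4).resolve_left (mul_ne_zero h2K h2K))
  subst ha1
  have hq : q ≠ 0 := hodd.pos.ne'
  refine ⟨eq_zero_of_mul_pow_mul_pow_eq_zero (m := q) (n := q ^ 2) ?_, rfl⟩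
  simpa [hq] using det1

/-- Theorem: for `q` odd, the chordal varieties `𝒮₁` and `𝒮₋₁` are disjoint:
if both `M(a₀, a₁)` and `M(a₀, -a₁)` have rank at most `2`, then
`a₀ = a₁ = 0`. -/
theorem chordal_varieties_disjoint_odd
    (q : ℕ) (F K : Type*) [Field F] [Field K]
    [Fintype F] [Fintype K] [Algebra F K]
    (hF : Fintype.card F = q) (hodd : Odd q)
    (hK : Module.finrank F K = 3)
    (a0 a1 : K)
    (h1 : (!![a0, a1, a1 ^ q ^ 2;
              a1, a0 ^ q, a1 ^ q;
              a1 ^ q ^ 2, a1 ^ q, a0 ^ q ^ 2] : Matrix (Fin 3) (Fin 3) K).rank ≤ 2)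
    (h2 : (!![a0, -a1, (-a1) ^ q ^ 2;
              -a1, a0 ^ q, (-a1) ^ q;
              (-a1) ^ q ^ 2, (-a1) ^ q, a0 ^ q ^ 2] : Matrix (Fin 3) (Fin 3) K).rank ≤ 2) :
    a0 = 0 ∧ a1 = 0 :=
  chordal_varieties_disjoint_odd_general q F K hF hodd a0 a1 h1 h2
end

section
/- Let q be an odd prime power, F a finite field with q elements, and K an extension field of F with [K:F] = 2n+1 (n ≥ 1). Let ω ∈ K be such that ω^2 - 1 is not a square in K. Then the map y ↦ y^{q^2} + (ω^q + ω·(ω^2-1)^{(q-1)/2})·y^q + (ω^2-1)^{(q-1)/2}·y has a root y ∈ K with y ≠ 0; equivalently, this F-linear map on K is not injective. -/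
/-!
Let `Q = |K|` and adjoin to `K` a square root `δ` of `ω² - 1`; as `δ ∉ K`, the `Q`-Frobenius maps
`δ ↦ -δ`, so `u = ω + δ` satisfies `u^{Q+1} = (ω - δ)(ω + δ) = 1`. Any `z` with `z^{q-1} = -u`
satisfies `z^q = -u z`, and a direct computation using `δ² = ω² - 1` shows `F₁(z) = 0`. Since `F₁`
is additive and has coefficients in `K`, also `F₁(z + z^Q) = 0`. Finally `z + z^Q` lies in `K`,
because `z^{Q²} = z` follows from `u^{Q+1} = 1` and `q - 1 ∣ Q - 1`, and it is nonzero, since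
`z^Q = -z` would force `(-u)^Q = -u`, i.e. `u ∈ K`.
-/

open Polynomial

def F1 {R : Type*} [CommRing R] (q : ℕ) (ω y : R) : R :=
  y ^ q ^ 2 + (ω ^ q + ω * (ω ^ 2 - 1) ^ ((q - 1) / 2)) * y ^ q +
    (ω ^ 2 - 1) ^ ((q - 1) / 2) * y

section F1

variable {R : Type*} [CommRing R]

lemma map_F1 {S G : Type*} [CommRing S] [FunLike G R S] [RingHomClass G R S] (f : G) (q : ℕ)
    (ω y : R) : f (F1 q ω y) = F1 q (f ω) (f y) := by
  simp only [F1, map_add, map_mul, map_pow, map_sub, map_one]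

lemma F1_add (F : Type*) [Field F] [Fintype F] [Algebra F R] (ω y z : R) :
    F1 (Fintype.card F) ω (y + z) = F1 (Fintype.card F) ω y + F1 (Fintype.card F) ω z := by
  have hadd (a b : R) : (a + b) ^ Fintype.card F = a ^ Fintype.card F + b ^ Fintype.card F :=
    map_add (FiniteField.frobeniusAlgHom F R) a b
  simp only [F1, sq (Fintype.card F), pow_mul, hadd]
  ring

lemma F1_eq_zero_of_pow_eq_neg_mul (F : Type*) [Field F] [Fintype F] [Algebra F R]
    (hq : Odd (Fintype.card F)) {ω δ z : R} (hδ : δ ^ 2 = ω ^ 2 - 1)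
    (hz : z ^ Fintype.card F = -(ω + δ) * z) : F1 (Fintype.card F) ω z = 0 := by
  obtain ⟨t, ht⟩ := hq
  have hT : (Fintype.card F - 1) / 2 = t := by omega
  have huq : (ω + δ) ^ Fintype.card F = ω ^ Fintype.card F + (ω ^ 2 - 1) ^ t * δ := by
    rw [← FiniteField.frobeniusAlgHom_apply F R, map_add, FiniteField.frobeniusAlgHom_apply,
      FiniteField.frobeniusAlgHom_apply, ht, pow_succ δ, pow_mul, hδ]
  have hz2 : z ^ Fintype.card F ^ 2 = (ω + δ) ^ Fintype.card F * (ω + δ) * z := by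
    rw [sq, pow_mul, hz, mul_pow, hz, Odd.neg_pow ⟨t, ht⟩]
    ring
  rw [F1, hz2, hz, huq, hT]
  linear_combination ((ω ^ 2 - 1) ^ t * z) * hδ

end F1

lemma pow_pow_eq_self_of_pow_eq {M : Type*} [Monoid M] {y a : M} {d Q : ℕ} (hQ : 0 < Q)
    (hd : d ∣ Q - 1) (hy : y ^ d = a) (ha : a ^ (Q + 1) = 1) : (y ^ Q) ^ Q = y := by
  obtain ⟨k, hk⟩ := hd
  have hexp : Q * Q = d * (k * (Q + 1)) + 1 := by
    obtain ⟨m, rfl⟩ : ∃ m, Q = m + 1 := ⟨Q - 1, by omega⟩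
    rw [Nat.add_sub_cancel] at hk
    rw [← mul_assoc, ← hk]
    ring
  rw [← pow_mul, hexp, pow_succ, pow_mul, hy, pow_mul', ha, one_pow, one_mul]

section FiniteField

variable {K L : Type*} [Field K] [Fintype K] [Field L] [Algebra K L]

lemma mem_range_algebraMap_of_pow_card_eq {x : L} (hx : x ^ Fintype.card K = x) :
    x ∈ Set.range (algebraMap K L) := by
  have hcard := Fintype.one_lt_card (α := K)
  have hprod : ∏ a : K, (X - C a) = (X ^ Fintype.card K - X : K[X]) := by
    have h := prod_multiset_X_sub_C_of_monic_of_roots_card_eq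
      (monic_X_pow_sub (degree_X.trans_lt (by exact_mod_cast hcard)))
      (by rw [FiniteField.roots_X_pow_card_sub_X, FiniteField.X_pow_card_sub_X_natDegree_eq K hcard]
          rfl)
    rwa [FiniteField.roots_X_pow_card_sub_X] at h
  have hx0 := congrArg (aeval x) hprod
  simp only [map_prod, map_sub, map_pow, aeval_X, aeval_C, hx, sub_self] at hx0
  obtain ⟨a, -, ha⟩ := Finset.prod_eq_zero_iff.mp hx0
  exact ⟨a, (sub_eq_zero.mp ha).symm⟩

lemma pow_card_eq_neg_of_sq_eq_algebraMap {δ : L} {c : K} (hδ : δ ^ 2 = algebraMap K L c)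
    (hδK : δ ∉ Set.range (algebraMap K L)) : δ ^ Fintype.card K = -δ := by
  have hsq : (δ ^ Fintype.card K) ^ 2 = δ ^ 2 := by
    rw [← pow_mul, mul_comm, pow_mul, hδ, ← map_pow, FiniteField.pow_card]
  exact (sq_eq_sq_iff_eq_or_eq_neg.mp hsq).resolve_left
    fun h ↦ hδK (mem_range_algebraMap_of_pow_card_eq h)

lemma pow_card_add_one_eq_one {ω : K} {δ : L} (hδ : δ ^ 2 = algebraMap K L (ω ^ 2 - 1))
    (hδK : δ ∉ Set.range (algebraMap K L)) :
    (algebraMap K L ω + δ) ^ (Fintype.card K + 1) = 1 := by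
  rw [pow_succ, ← FiniteField.frobeniusAlgHom_apply K L, map_add, AlgHom.commutes,
    FiniteField.frobeniusAlgHom_apply, pow_card_eq_neg_of_sq_eq_algebraMap hδ hδK]
  rw [map_sub, map_pow, map_one] at hδ
  linear_combination -hδ

lemma add_pow_card_ne_zero {y a : L} {d : ℕ} (hd : Even d) (hy : y ^ d = a)
    (ha : a ∉ Set.range (algebraMap K L)) : y + y ^ Fintype.card K ≠ 0 := by
  intro h
  refine ha (mem_range_algebraMap_of_pow_card_eq ?_)
  rw [← hy, ← pow_mul, mul_comm, pow_mul, eq_neg_of_add_eq_zero_right h, hd.neg_pow]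

end FiniteField

lemma exists_ne_zero_pow_card_eq_self_F1_eq_zero {F K L : Type*} [Field F] [Fintype F]
    [Field K] [Fintype K] [Field L] [IsAlgClosed L] [Algebra F L] [Algebra K L]
    (hq : Odd (Fintype.card F)) (hdvd : Fintype.card F - 1 ∣ Fintype.card K - 1) {ω : K}
    (hω : ¬ ∃ s : K, s ^ 2 = ω ^ 2 - 1) :
    ∃ y : L, y ≠ 0 ∧ y ^ Fintype.card K = y ∧ F1 (Fintype.card F) (algebraMap K L ω) y = 0 := by
  set ι := algebraMap K L
  set φ := FiniteField.frobeniusAlgHom K L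
  obtain ⟨δ, hδ⟩ := IsAlgClosed.exists_pow_nat_eq (ι (ω ^ 2 - 1)) two_pos
  have hδK : δ ∉ Set.range ι := by
    rintro ⟨s, hs⟩
    exact hω ⟨s, ι.injective (by rw [map_pow, hs, hδ])⟩
  set u := ι ω + δ
  have huK : -u ∉ Set.range ι := by
    rintro ⟨a, ha⟩
    exact hδK ⟨-a - ω, by rw [map_sub, map_neg, ha]; ring⟩
  have hu : (-u) ^ (Fintype.card K + 1) = 1 := by
    rw [pow_succ, ← FiniteField.frobeniusAlgHom_apply, map_neg, neg_mul_neg,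
      FiniteField.frobeniusAlgHom_apply, ← pow_succ, pow_card_add_one_eq_one hδ hδK]
  obtain ⟨z, hz⟩ := IsAlgClosed.exists_pow_nat_eq (-u) (n := Fintype.card F - 1)
    (Nat.sub_pos_of_lt Fintype.one_lt_card)
  have hzq : z ^ Fintype.card F = -u * z := by
    rw [← hz, ← pow_succ, Nat.sub_add_cancel Fintype.card_pos]
  have hF1z : F1 (Fintype.card F) (ι ω) z = 0 :=
    F1_eq_zero_of_pow_eq_neg_mul F hq (by rw [hδ, map_sub, map_pow, map_one]) hzq
  have hφz : F1 (Fintype.card F) (ι ω) (φ z) = 0 := by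
    rw [← φ.commutes ω, ← map_F1, hF1z, map_zero]
  refine ⟨z + φ z, add_pow_card_ne_zero (Nat.Odd.sub_odd hq odd_one) hz huK, ?_, ?_⟩
  · rw [← FiniteField.frobeniusAlgHom_apply, map_add, add_comm]
    exact congrArg (· + φ z) (pow_pow_eq_self_of_pow_eq Fintype.card_pos hdvd hz hu)
  · rw [F1_add F, hF1z, hφz, add_zero]

theorem F1_has_nonzero_root_general
    (q : ℕ) (F K : Type*) [Field F] [Field K]
    [Fintype F] [Fintype K] [Algebra F K]
    (hF : Fintype.card F = q) (hodd : Odd q)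
    (ω : K) (hω : ¬ ∃ s : K, s ^ 2 = ω ^ 2 - 1) :
    ∃ y : K, y ≠ 0 ∧
      y ^ q ^ 2 + (ω ^ q + ω * (ω ^ 2 - 1) ^ ((q - 1) / 2)) * y ^ q +
        (ω ^ 2 - 1) ^ ((q - 1) / 2) * y = 0 := by
  subst hF
  have hdvd : Fintype.card F - 1 ∣ Fintype.card K - 1 := by
    rw [Module.card_eq_pow_finrank (K := F) (V := K)]
    exact Nat.sub_one_dvd_pow_sub_one _ _
  obtain ⟨y, hy0, hyK, hyF1⟩ :=
    exists_ne_zero_pow_card_eq_self_F1_eq_zero (L := AlgebraicClosure K) hodd hdvd hω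
  obtain ⟨y₀, rfl⟩ := mem_range_algebraMap_of_pow_card_eq hyK
  refine ⟨y₀, by simpa using hy0, (algebraMap K (AlgebraicClosure K)).injective ?_⟩
  rw [map_zero, ← hyF1]
  exact map_F1 _ _ _ _

/-- For `q` odd and `ω² - 1` a non-square in `K`, the linearized polynomial
`F₁(y) = y^{q²} + (ω^q + ω(ω²-1)^{(q-1)/2}) y^q + (ω²-1)^{(q-1)/2} y`
has a nonzero root in `K`. -/
theorem F1_has_nonzero_root
    (q n : ℕ) (hn : 1 ≤ n) (F K : Type*) [Field F] [Field K]
    [Fintype F] [Fintype K] [Algebra F K]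
    (hF : Fintype.card F = q) (hodd : Odd q)
    (hK : Module.finrank F K = 2 * n + 1)
    (ω : K) (hω : ¬ ∃ s : K, s ^ 2 = ω ^ 2 - 1) :
    ∃ y : K, y ≠ 0 ∧
      y ^ q ^ 2 + (ω ^ q + ω * (ω ^ 2 - 1) ^ ((q - 1) / 2)) * y ^ q +
        (ω ^ 2 - 1) ^ ((q - 1) / 2) * y = 0 :=
  F1_has_nonzero_root_general q F K hF hodd ω hω
end

section
/- Let q > 2 be an even prime power, F a finite field with q elements, K an extension field of F with [K:F] = 2n+1 (n ≥ 1), and let α ∈ F with α ≠ 0 and α ≠ 1 (identified with its image in K). Let ω ∈ K with ω ∉ {0, 1, α}, and let t ∈ K satisfy t^{q+1} = (ω·(α+1) + α)/(α^2 + 1). Set x = t + α/(α+1) and y = t + 1/(α+1). Then x ≠ 0, y ≠ 0, x^2 + y^2 = 1, and x^{q+1} + α·y^{q+1} = ω. -/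
/-!
Over `F` the `q`-th power map is the Frobenius, which fixes `F`, so with `a = α`,
`x = t + a/(a+1)` and `y = t + 1/(a+1)` one has `x^q = t^q + a/(a+1)` and `y^q = t^q + 1/(a+1)`.
In characteristic two `x + y = 1`, hence `x^2 + y^2 = (x + y)^2 = 1`, and expanding
`x^q x + a y^q y` leaves `(a+1) t^(q+1) + a/(a+1)`, which is `ω` by the choice of `t`
since `a^2 + 1 = (a+1)^2`. Finally `x = 0` would force `y = 1` and `ω = a`, and `y = 0` would
force `x = 1` and `ω = 1`.
-/

theorem FiniteField.charP_two_of_even_card {F : Type*} [Field F] [Fintype F]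
    (h : Even (Fintype.card F)) : CharP F 2 :=
  ringChar.eq_iff.mp (FiniteField.even_card_iff_char_two.mpr (Nat.even_iff.mp h))

theorem FiniteField.add_algebraMap_pow_card {F R : Type*} [Field F] [Fintype F] [CommRing R]
    [Algebra F R] (x : R) (c : F) :
    (x + algebraMap F R c) ^ Fintype.card F = x ^ Fintype.card F + algebraMap F R c := by
  simpa using map_add (FiniteField.frobeniusAlgHom F R) x (algebraMap F R c)

namespace CharTwo

variable {K : Type*} [Field K] [CharP K 2] {a : K}

theorem add_div_add_one_add_one_div (ha : a + 1 ≠ 0) (t : K) :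
    t + a / (a + 1) + (t + 1 / (a + 1)) = 1 := by
  field_simp
  linear_combination (t * (a + 1)) * (two_eq_zero (R := K))

theorem secant_norm_eq (ha : a + 1 ≠ 0) {ω s t : K}
    (hst : s * t = (ω * (a + 1) + a) / (a ^ 2 + 1)) :
    (s + a / (a + 1)) * (t + a / (a + 1)) + a * ((s + 1 / (a + 1)) * (t + 1 / (a + 1))) = ω := by
  have hsq : a ^ 2 + 1 = (a + 1) ^ 2 := by rw [add_sq, one_pow]
  rw [hsq] at hst
  field_simp at hst ⊢
  linear_combination (a + 1) * hst + (a + a ^ 2 + a * (a + 1) * (s + t)) * (two_eq_zero (R := K))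

end CharTwo

theorem even_case_secant_identity_general
    (q : ℕ) (F K : Type*) [Field F] [Field K]
    [Fintype F] [Algebra F K]
    (hF : Fintype.card F = q) (heven : Even q)
    (α : F) (hα1 : α ≠ 1)
    (ω : K) (hω1 : ω ≠ 1) (hωα : ω ≠ algebraMap F K α)
    (t : K)
    (ht : t ^ (q + 1) =
      (ω * (algebraMap F K α + 1) + algebraMap F K α) /
        ((algebraMap F K α) ^ 2 + 1)) :
    t + algebraMap F K α / (algebraMap F K α + 1) ≠ 0 ∧
    t + 1 / (algebraMap F K α + 1) ≠ 0 ∧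
    (t + algebraMap F K α / (algebraMap F K α + 1)) ^ 2 +
      (t + 1 / (algebraMap F K α + 1)) ^ 2 = 1 ∧
    (t + algebraMap F K α / (algebraMap F K α + 1)) ^ (q + 1) +
      algebraMap F K α * (t + 1 / (algebraMap F K α + 1)) ^ (q + 1) = ω := by
  subst hF
  have : CharP F 2 := FiniteField.charP_two_of_even_card heven
  have : CharP K 2 := charP_of_injective_algebraMap (algebraMap F K).injective 2
  have ha : algebraMap F K α + 1 ≠ 0 :=
    mt CharTwo.add_eq_zero.mp ((map_ne_one_iff _ (algebraMap F K).injective).mpr hα1)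
  have hsum := CharTwo.add_div_add_one_add_one_div ha t
  have hnorm : (t + algebraMap F K α / (algebraMap F K α + 1)) ^ (Fintype.card F + 1) +
      algebraMap F K α * (t + 1 / (algebraMap F K α + 1)) ^ (Fintype.card F + 1) = ω := by
    have hc : algebraMap F K α / (algebraMap F K α + 1) = algebraMap F K (α / (α + 1)) := by
      simp
    have hd : 1 / (algebraMap F K α + 1) = algebraMap F K (1 / (α + 1)) := by simp
    rw [pow_succ, pow_succ, hc, hd, FiniteField.add_algebraMap_pow_card,
      FiniteField.add_algebraMap_pow_card, ← hc, ← hd]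
    exact CharTwo.secant_norm_eq ha (by rw [← pow_succ, ht])
  set x := t + algebraMap F K α / (algebraMap F K α + 1)
  set y := t + 1 / (algebraMap F K α + 1)
  refine ⟨fun hx => hωα ?_, fun hy => hω1 ?_, by rw [← CharTwo.add_sq, hsum, one_pow], hnorm⟩
  · rw [hx, zero_add] at hsum
    simpa [hx, hsum] using hnorm.symm
  · rw [hy, add_zero] at hsum
    simpa [hy, hsum] using hnorm.symm

/-- Key identity for the even case: if `t^{q+1} = (ω(α+1) + α)/(α² + 1)`,
`x = t + α/(α+1)` and `y = t + 1/(α+1)`, then `x, y ≠ 0`, `x² + y² = 1` and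
`x^{q+1} + α y^{q+1} = ω`. -/
theorem even_case_secant_identity
    (q n : ℕ) (hn : 1 ≤ n) (F K : Type*) [Field F] [Field K]
    [Fintype F] [Fintype K] [Algebra F K]
    (hF : Fintype.card F = q) (heven : Even q) (hq2 : 2 < q)
    (hK : Module.finrank F K = 2 * n + 1)
    (α : F) (hα0 : α ≠ 0) (hα1 : α ≠ 1)
    (ω : K) (hω0 : ω ≠ 0) (hω1 : ω ≠ 1) (hωα : ω ≠ algebraMap F K α)
    (t : K)
    (ht : t ^ (q + 1) =
      (ω * (algebraMap F K α + 1) + algebraMap F K α) /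
        ((algebraMap F K α) ^ 2 + 1)) :
    t + algebraMap F K α / (algebraMap F K α + 1) ≠ 0 ∧
    t + 1 / (algebraMap F K α + 1) ≠ 0 ∧
    (t + algebraMap F K α / (algebraMap F K α + 1)) ^ 2 +
      (t + 1 / (algebraMap F K α + 1)) ^ 2 = 1 ∧
    (t + algebraMap F K α / (algebraMap F K α + 1)) ^ (q + 1) +
      algebraMap F K α * (t + 1 / (algebraMap F K α + 1)) ^ (q + 1) = ω :=
  even_case_secant_identity_general q F K hF heven α hα1 ω hω1 hωα t ht
end

section
/- Let q be a prime power, F a finite field with q elements, K an extension field of F with [K:F] = 2n+1 (n ≥ 1), η a generator of the multiplicative group K^×, and ω ∈ K \ {0}. Then for all x, y ∈ K \ {0} there exists a unique natural number i with 0 ≤ i < (q^{2n+1}-1)/(q-1) such that for some c ∈ F \ {0} (identified with its image in K): η^{2i}·x^2 = c·y^2 and η^{(q+1)·i}·ω·x^{q+1} = c·ω·y^{q+1}. -/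
/-!
Write `q = |F|` and `N = (q^{2n+1} - 1)/(q - 1)`. For nonzero `a, b ∈ K` the points
`[(a², a^{q+1})]` and `[(b², b^{q+1})]` coincide over `F` exactly when `(a/b)^{q-1} = 1`,
i.e. when `a/b ∈ F`, the fixed field of Frobenius. Applied to `a = ηⁱx`, `b = y`, the condition
on `i` becomes `(η^{q-1})ⁱ = (y/x)^{q-1}`. Since `η` generates `K^×`, `η^{q-1}` is a primitive
`N`-th root of unity, and `(y/x)^{q-1}` is an `N`-th root of unity, so it is `(η^{q-1})ⁱ` for
exactly one `i < N`.
-/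

theorem FiniteField.mem_range_algebraMap_iff_pow_card_eq (F : Type*) {K : Type*} [Field F]
    [Fintype F] [Field K] [Finite K] [Algebra F K] {z : K} :
    z ∈ Set.range (algebraMap F K) ↔ z ^ Fintype.card F = z := by
  refine ⟨?_, fun hz => (IsGalois.mem_range_algebraMap_iff_fixed z).2 fun f => ?_⟩
  · rintro ⟨c, rfl⟩
    rw [← map_pow, pow_card]
  · obtain ⟨k, rfl⟩ := (bijective_frobeniusAlgEquivOfAlgebraic_pow F K).2 f
    rw [AlgEquiv.coe_pow, coe_frobeniusAlgEquivOfAlgebraic]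
    exact Function.iterate_fixed hz k

theorem FiniteField.exists_algebraMap_mul_sq_and_pow_card_succ_iff {F K : Type*} [Field F]
    [Fintype F] [Field K] [Finite K] [Algebra F K] {a b : K} (hb : b ≠ 0) :
    (∃ c : F, c ≠ 0 ∧ a ^ 2 = algebraMap F K c * b ^ 2 ∧
        a ^ (Fintype.card F + 1) = algebraMap F K c * b ^ (Fintype.card F + 1)) ↔
      a ^ (Fintype.card F - 1) = b ^ (Fintype.card F - 1) := by
  set q := Fintype.card F
  have hq : 1 < q := Fintype.one_lt_card
  obtain ⟨w, rfl⟩ : ∃ w, a = w * b := ⟨a / b, (div_mul_cancel₀ a hb).symm⟩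
  simp only [mul_pow, mul_left_inj' (pow_ne_zero _ hb), mul_eq_right₀ (pow_ne_zero _ hb)]
  have hsucc : w ^ (q + 1) = w ^ (q - 1) * w ^ 2 := by rw [← pow_add]; congr 1; omega
  constructor
  · rintro ⟨c, hc, h2, hq1⟩
    rw [← h2, hsucc] at hq1
    exact (mul_eq_right₀ (by simpa [h2] using hc)).1 hq1
  · intro hw
    have hw0 : w ≠ 0 := by rintro rfl; simp [zero_pow (by omega : q - 1 ≠ 0)] at hw
    have hwq : w ^ q = w := by rw [← Nat.sub_add_cancel hq.le, pow_succ, hw, one_mul]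
    obtain ⟨c, rfl⟩ := (mem_range_algebraMap_iff_pow_card_eq F).2 hwq
    refine ⟨c ^ 2, by simpa using hw0, by rw [map_pow], by rw [map_pow, hsucc, hw, one_mul]⟩

theorem FiniteField.exists_algebraMap_mul_iff_pow_eq {F K : Type*} [Field F] [Fintype F]
    [Field K] [Finite K] [Algebra F K] {η x y ω : K} (hx : x ≠ 0) (hy : y ≠ 0) (hω : ω ≠ 0)
    (i : ℕ) :
    (∃ c : F, c ≠ 0 ∧ η ^ (2 * i) * x ^ 2 = algebraMap F K c * y ^ 2 ∧
        η ^ ((Fintype.card F + 1) * i) * (ω * x ^ (Fintype.card F + 1)) =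
          algebraMap F K c * (ω * y ^ (Fintype.card F + 1))) ↔
      (η ^ (Fintype.card F - 1)) ^ i = (y / x) ^ (Fintype.card F - 1) := by
  have hpow (k : ℕ) : η ^ (k * i) * x ^ k = (η ^ i * x) ^ k := by
    rw [mul_pow, ← pow_mul, mul_comm i k]
  simp_rw [mul_left_comm _ ω, mul_right_inj' hω, hpow,
    exists_algebraMap_mul_sq_and_pow_card_succ_iff hy, div_pow, eq_div_iff (pow_ne_zero _ hx),
    ← hpow, ← pow_mul]

theorem FiniteField.isPrimitiveRoot_of_forall_exists_pow_eq {K : Type*} [Field K] [Fintype K]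
    {η : K} (hη0 : η ≠ 0) (hη : ∀ z : K, z ≠ 0 → ∃ m : ℕ, η ^ m = z) :
    IsPrimitiveRoot η (Fintype.card K - 1) := by
  classical
  rw [IsPrimitiveRoot.iff_orderOf, ← Fintype.card_units, ← Nat.card_eq_fintype_card,
    ← Units.val_mk0 hη0, orderOf_units]
  refine orderOf_eq_card_of_forall_mem_powers fun z => ?_
  obtain ⟨m, hm⟩ := hη z z.ne_zero
  exact ⟨m, Units.ext (by simpa using hm)⟩

theorem IsPrimitiveRoot.existsUnique_pow_eq {R : Type*} [CommRing R] [IsDomain R] {k : ℕ}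
    [NeZero k] {ζ ξ : R} (h : IsPrimitiveRoot ζ k) (hξ : ξ ^ k = 1) :
    ∃! i, i < k ∧ ζ ^ i = ξ := by
  obtain ⟨i, hi, rfl⟩ := h.eq_pow_of_pow_eq_one hξ
  exact ⟨i, ⟨hi, rfl⟩, fun j ⟨hj, hji⟩ => h.pow_inj hj hi hji⟩

theorem FiniteField.existsUnique_lt_pow_pow_card_sub_one_eq (F : Type*) {K : Type*} [Field F]
    [Fintype F] [Field K] [Fintype K] [Algebra F K] {η : K} (hη0 : η ≠ 0)
    (hη : ∀ z : K, z ≠ 0 → ∃ m : ℕ, η ^ m = z) {z : K} (hz : z ≠ 0) :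
    ∃! i, i < (Fintype.card K - 1) / (Fintype.card F - 1) ∧
      (η ^ (Fintype.card F - 1)) ^ i = z ^ (Fintype.card F - 1) := by
  have hq : 1 < Fintype.card F := Fintype.one_lt_card
  have hK : 1 < Fintype.card K := Fintype.one_lt_card
  have hdvd : Fintype.card F - 1 ∣ Fintype.card K - 1 := by
    simpa [Module.card_eq_pow_finrank (K := F) (V := K)] using
      Nat.sub_dvd_pow_sub_pow (Fintype.card F) 1 (Module.finrank F K)
  have : NeZero ((Fintype.card K - 1) / (Fintype.card F - 1)) :=
    ⟨(Nat.div_pos (Nat.le_of_dvd (by omega) hdvd) (by omega)).ne'⟩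
  refine ((isPrimitiveRoot_of_forall_exists_pow_eq hη0 hη).pow_of_dvd (by omega)
    hdvd).existsUnique_pow_eq ?_
  rw [← pow_mul, Nat.mul_div_cancel' hdvd]
  exact pow_card_sub_one_eq_one z hz

theorem projectivity_acts_regularly_general
    (q n : ℕ) (F K : Type*) [Field F] [Field K]
    [Fintype F] [Fintype K] [Algebra F K]
    (hF : Fintype.card F = q) (hK : Module.finrank F K = 2 * n + 1)
    (η : K) (hη0 : η ≠ 0) (hη : ∀ z : K, z ≠ 0 → ∃ m : ℕ, η ^ m = z)
    (ω : K) (hω : ω ≠ 0) :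
    ∀ x y : K, x ≠ 0 → y ≠ 0 →
      ∃! i : ℕ, i < (q ^ (2 * n + 1) - 1) / (q - 1) ∧
        ∃ c : F, c ≠ 0 ∧
          η ^ (2 * i) * x ^ 2 = algebraMap F K c * y ^ 2 ∧
          η ^ ((q + 1) * i) * (ω * x ^ (q + 1)) =
            algebraMap F K c * (ω * y ^ (q + 1)) := by
  intro x y hx hy
  subst hF
  have hcardK : Fintype.card K = Fintype.card F ^ (2 * n + 1) := by
    rw [Module.card_eq_pow_finrank (K := F), hK]
  simp_rw [FiniteField.exists_algebraMap_mul_iff_pow_eq hx hy hω, ← hcardK]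
  exact FiniteField.existsUnique_lt_pow_pow_card_sub_one_eq F hη0 hη (div_ne_zero hy hx)

/-- Lemma: the projectivity `φ : (a, b) ↦ (η² a, η^{q+1} b)` generates a cyclic
group of order `(q^{2n+1}-1)/(q-1)` acting regularly on `𝒱_ω`: for all nonzero
`x, y ∈ K` there is a unique `i < (q^{2n+1}-1)/(q-1)` with
`φ^i ([(x², ω x^{q+1})]) = [(y², ω y^{q+1})]`. -/
theorem projectivity_acts_regularly
    (q n : ℕ) (hn : 1 ≤ n) (F K : Type*) [Field F] [Field K]
    [Fintype F] [Fintype K] [Algebra F K]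
    (hF : Fintype.card F = q) (hK : Module.finrank F K = 2 * n + 1)
    (η : K) (hη0 : η ≠ 0) (hη : ∀ z : K, z ≠ 0 → ∃ m : ℕ, η ^ m = z)
    (ω : K) (hω : ω ≠ 0) :
    ∀ x y : K, x ≠ 0 → y ≠ 0 →
      ∃! i : ℕ, i < (q ^ (2 * n + 1) - 1) / (q - 1) ∧
        ∃ c : F, c ≠ 0 ∧
          η ^ (2 * i) * x ^ 2 = algebraMap F K c * y ^ 2 ∧
          η ^ ((q + 1) * i) * (ω * x ^ (q + 1)) =
            algebraMap F K c * (ω * y ^ (q + 1)) :=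
  projectivity_acts_regularly_general q n F K hF hK η hη0 hη ω hω
end
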